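/- arXiv:1502.03666 — 7 statements merged into one kernel-verified Lean document; each statement's English description precedes it below -/
import Mathlib

section
/- Under CDF-based scheduling, the conditional distribution of a user's SNR given that the user is selected is [F(γ)]^{1/α}, where α = w_i / Σ_j w_j is the user's channel access ratio. Formally, if γ_i has CDF F_i and U_j = F_j(γ_j) are independent uniforms, then Pr{γ_i ≤ γ | U_i^{1/w_i} > U_j^{1/w_j} ∀ j ≠ i} = [F_i(γ)]^{1/α_i}. -/
/-!
Write `U j = F j (γ j)`. By the probability integral transform each `U j` is uniform on `(0, 1]`,
and the `U j` are independent. Since `U j ^ (1 / w j) < U i ^ (1 / w i)` iff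
`U j < U i ^ (w j / w i)`, conditioning on `U i = u` gives selection probability
`∏_{j ≠ i} u ^ (w j / w i) = u ^ (1 / α - 1)`. Hence `P(U i ≤ c, i selected) = α c ^ (1 / α)`,
and dividing the case `c = F i x` by the case `c = 1` gives `F i x ^ (1 / α)`.
-/

open MeasureTheory ProbabilityTheory Set

lemma Real.rpow_one_div_lt_rpow_one_div_iff {x y p q : ℝ} (hx : 0 ≤ x) (hy : 0 ≤ y) (hp : 0 < p) :
    x ^ (1 / p) < y ^ (1 / q) ↔ x < y ^ (p / q) := by
  rw [one_div p, Real.rpow_inv_lt_iff_of_pos hx (Real.rpow_nonneg hy _) hp, ← Real.rpow_mul hy,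
    one_div, inv_mul_eq_div]

lemma StrictMono.mem_Ioo_of_mem_Icc {α β : Type*} [Preorder α] [NoMinOrder α] [NoMaxOrder α]
    [Preorder β] {F : α → β} {a b : β} (hF : StrictMono F) (h : ∀ x, F x ∈ Icc a b) (x : α) :
    F x ∈ Ioo a b := by
  obtain ⟨y, hy⟩ := exists_lt x
  obtain ⟨z, hz⟩ := exists_gt x
  exact ⟨(h y).1.trans_lt (hF hy), (hF hz).trans_le (h z).2⟩

lemma volume_restrict_Ioc_zero_one_Iio {t : ℝ} (ht1 : t ≤ 1) :
    volume.restrict (Ioc (0 : ℝ) 1) (Iio t) = ENNReal.ofReal t := by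
  have : Iio t ∩ Ioc (0 : ℝ) 1 = Ioo 0 t := by
    ext u
    simp only [mem_inter_iff, mem_Iio, mem_Ioc, mem_Ioo]
    grind
  rw [Measure.restrict_apply measurableSet_Iio, this, Real.volume_Ioo, sub_zero]

lemma setLIntegral_Ioc_zero_ofReal_rpow {a c : ℝ} (ha : 0 ≤ a) (hc : 0 ≤ c) :
    ∫⁻ u in Ioc 0 c, ENNReal.ofReal (u ^ a) = ENNReal.ofReal (c ^ (a + 1) / (a + 1)) := by
  have hint : IntegrableOn (fun u : ℝ => u ^ a) (Ioc 0 c) :=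
    (intervalIntegral.intervalIntegrable_rpow' (by linarith)).1
  rw [← ofReal_integral_eq_lintegral_ofReal hint
    ((ae_restrict_mem measurableSet_Ioc).mono fun u hu => Real.rpow_nonneg hu.1.le a),
    ← intervalIntegral.integral_of_le hc, integral_rpow (Or.inl (by linarith)),
    Real.zero_rpow (by linarith), sub_zero]

lemma volume_restrict_Ioc_pi_setOf_lt_rpow {ι : Type*} [Fintype ι] (a : ι → ℝ)
    (ha : ∀ j, 0 ≤ a j) {u : ℝ} (hu : u ∈ Ioc (0 : ℝ) 1) :
    Measure.pi (fun _ : ι => volume.restrict (Ioc (0 : ℝ) 1)) {v | ∀ j, v j < u ^ a j} =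
      ENNReal.ofReal (u ^ ∑ j, a j) := by
  have hset : {v : ι → ℝ | ∀ j, v j < u ^ a j} = univ.pi fun j => Iio (u ^ a j) := by
    ext v
    simp
  rw [hset, Measure.pi_pi, Real.rpow_sum_of_pos hu.1,
    ENNReal.ofReal_prod_of_nonneg fun j _ => Real.rpow_nonneg hu.1.le _]
  exact Finset.prod_congr rfl fun j _ =>
    volume_restrict_Ioc_zero_one_Iio (Real.rpow_le_one hu.1.le hu.2 (ha j))

lemma measurableSet_setOf_le_and_lt_rpow {ι : Type*} [Fintype ι] (a : ι → ℝ) (c : ℝ) :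
    MeasurableSet {p : ℝ × (ι → ℝ) | p.1 ≤ c ∧ ∀ j, p.2 j < p.1 ^ a j} := by
  simp only [ofPred_and, ofPred_forall]
  exact (measurableSet_le measurable_fst measurable_const).inter
    (MeasurableSet.iInter fun j => measurableSet_lt (by fun_prop) (by fun_prop))

lemma volume_restrict_Ioc_prod_pi_setOf_le_and_lt_rpow {ι : Type*} [Fintype ι] (a : ι → ℝ)
    (ha : ∀ j, 0 ≤ a j) {c : ℝ} (hc0 : 0 ≤ c) (hc1 : c ≤ 1) :
    ((volume.restrict (Ioc (0 : ℝ) 1)).prod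
        (Measure.pi fun _ : ι => volume.restrict (Ioc (0 : ℝ) 1)))
        {p | p.1 ≤ c ∧ ∀ j, p.2 j < p.1 ^ a j} =
      ENNReal.ofReal (c ^ (∑ j, a j + 1) / (∑ j, a j + 1)) := by
  have hslice : ∀ u ∈ Ioc (0 : ℝ) 1,
      Measure.pi (fun _ : ι => volume.restrict (Ioc (0 : ℝ) 1))
        (Prod.mk u ⁻¹' {p | p.1 ≤ c ∧ ∀ j, p.2 j < p.1 ^ a j}) =
      (Iic c).indicator (fun u => ENNReal.ofReal (u ^ ∑ j, a j)) u := by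
    intro u hu
    by_cases huc : u ≤ c
    · simp only [preimage_ofPred_eq, huc, true_and, indicator_of_mem (mem_Iic.2 huc)]
      exact volume_restrict_Ioc_pi_setOf_lt_rpow a ha hu
    · simp [huc]
  rw [Measure.prod_apply (measurableSet_setOf_le_and_lt_rpow a c),
    setLIntegral_congr_fun measurableSet_Ioc hslice,
    lintegral_indicator measurableSet_Iic, Measure.restrict_restrict measurableSet_Iic,
    Iic_inter_Ioc_of_le hc1]
  exact setLIntegral_Ioc_zero_ofReal_rpow (Finset.sum_nonneg fun j _ => ha j) hc0

section

variable {Ω : Type*} [MeasurableSpace Ω] {μ : Measure Ω} [IsProbabilityMeasure μ]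

lemma ProbabilityTheory.iIndepFun.map_prodMk_eq_prod_pi {ι β : Type*} [Fintype ι] [DecidableEq ι]
    [MeasurableSpace β] {X : ι → Ω → β} (hX : iIndepFun X μ) (hmeas : ∀ j, Measurable (X j))
    (i : ι) :
    μ.map (fun ω => (X i ω, fun j : ({i}ᶜ : Finset ι) => X j ω)) =
      (μ.map (X i)).prod (Measure.pi fun j : ({i}ᶜ : Finset ι) => μ.map (X j)) := by
  have hpair : IndepFun (X i) (fun ω (j : ({i}ᶜ : Finset ι)) => X j ω) μ :=
    (hX.indepFun_finset {i} {i}ᶜ disjoint_compl_right hmeas).comp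
      (measurable_pi_apply (⟨i, Finset.mem_singleton_self i⟩ : ({i} : Finset ι))) measurable_id
  rw [(indepFun_iff_map_prod_eq_prod_map_map (hmeas i).aemeasurable
      (measurable_pi_lambda (fun ω (j : ({i}ᶜ : Finset ι)) => X j ω)
        fun j => hmeas j).aemeasurable).1 hpair,
    iIndepFun.map_fun_eq_pi_map (fun j => (hmeas _).aemeasurable)
      (hX.precomp (g := ((↑) : ({i}ᶜ : Finset ι) → ι)) Subtype.val_injective)]

lemma map_comp_eq_volume_restrict_Ioc {g : Ω → ℝ} {F : ℝ → ℝ} (hg : Measurable g)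
    (hFmono : StrictMono F) (hFcont : Continuous F) (hF01 : ∀ x, F x ∈ Icc 0 1)
    (hcdf : ∀ x, μ {ω | g ω ≤ x} = ENNReal.ofReal (F x)) :
    μ.map (fun ω => F (g ω)) = volume.restrict (Ioc 0 1) := by
  have : IsProbabilityMeasure (μ.map g) := Measure.isProbabilityMeasure_map hg.aemeasurable
  have hF_eq_cdf : F = cdf (μ.map g) := funext fun x => by
    rw [← ENNReal.ofReal_eq_ofReal_iff (hF01 x).1 (cdf_nonneg _ x), ofReal_cdf,
      Measure.map_apply hg measurableSet_Iic, ← hcdf]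
    rfl
  have hF_mem : ∀ x, F x ∈ Ioo 0 1 := hFmono.mem_Ioo_of_mem_Icc hF01
  have hF_range : ∀ u ∈ Ioo (0 : ℝ) 1, ∃ z, F z = u := fun u hu => by
    obtain ⟨a, ha⟩ := ((hF_eq_cdf ▸ tendsto_cdf_atBot _).eventually (gt_mem_nhds hu.1)).exists
    obtain ⟨b, hb⟩ := ((hF_eq_cdf ▸ tendsto_cdf_atTop _).eventually (lt_mem_nhds hu.2)).exists
    exact mem_range_of_exists_le_of_exists_ge hFcont ⟨a, ha.le⟩ ⟨b, hb.le⟩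
  refine Measure.ext_of_Iic _ _ fun u => ?_
  rw [Measure.map_apply (f := fun ω => F (g ω)) (hFcont.measurable.comp hg) measurableSet_Iic,
    Measure.restrict_apply measurableSet_Iic]
  rcases le_or_gt u 0 with hu0 | hu0
  · have hempty : Iic u ∩ Ioc (0 : ℝ) 1 = ∅ := by
      ext v
      simp only [mem_inter_iff, mem_Iic, mem_Ioc, mem_empty_iff_false, iff_false]
      grind
    have hpre : (fun ω => F (g ω)) ⁻¹' Iic u = ∅ :=
      eq_empty_of_forall_notMem fun ω hω => (hu0.trans_lt (hF_mem (g ω)).1).not_ge hω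
    rw [hpre, hempty, measure_empty, measure_empty]
  rcases lt_or_ge u 1 with hu1 | hu1
  · obtain ⟨z, rfl⟩ := hF_range u ⟨hu0, hu1⟩
    have hpre : (fun ω => F (g ω)) ⁻¹' Iic (F z) = {ω | g ω ≤ z} := by
      ext ω
      simp [hFmono.le_iff_le]
    rw [hpre, hcdf, Iic_inter_Ioc_of_le hu1.le, Real.volume_Ioc, sub_zero]
  · have huniv : (fun ω => F (g ω)) ⁻¹' Iic u = univ :=
      eq_univ_of_forall fun ω => (hF_mem (g ω)).2.le.trans hu1
    rw [huniv, measure_univ, inter_eq_right.2 fun v hv => hv.2.trans hu1, Real.volume_Ioc,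
      sub_zero, ENNReal.ofReal_one]

lemma measure_le_and_forall_lt_rpow_of_iIndepFun {ι : Type*} [Fintype ι] [DecidableEq ι]
    {U : ι → Ω → ℝ} (hU : iIndepFun U μ) (hmeas : ∀ j, Measurable (U j))
    (hlaw : ∀ j, μ.map (U j) = volume.restrict (Ioc 0 1)) (a : ι → ℝ) (ha : ∀ j, 0 ≤ a j)
    (i : ι) {c : ℝ} (hc0 : 0 ≤ c) (hc1 : c ≤ 1) :
    μ {ω | U i ω ≤ c ∧ ∀ j, j ≠ i → U j ω < U i ω ^ a j} =
      ENNReal.ofReal (c ^ (∑ j ∈ {i}ᶜ, a j + 1) / (∑ j ∈ {i}ᶜ, a j + 1)) := by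
  set Φ : Ω → ℝ × (({i}ᶜ : Finset ι) → ℝ) := fun ω => (U i ω, fun j => U j ω)
  have hΦ : Measurable Φ := (hmeas i).prodMk (measurable_pi_lambda _ fun j => hmeas j)
  have hpre : {ω | U i ω ≤ c ∧ ∀ j, j ≠ i → U j ω < U i ω ^ a j} =
      Φ ⁻¹' {p | p.1 ≤ c ∧ ∀ j, p.2 j < p.1 ^ a j} := by
    ext ω
    simp [Φ]
  rw [hpre, ← Measure.map_apply hΦ (measurableSet_setOf_le_and_lt_rpow _ c),
    hU.map_prodMk_eq_prod_pi hmeas i, hlaw, funext fun j : ({i}ᶜ : Finset ι) => hlaw j,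
    volume_restrict_Ioc_prod_pi_setOf_le_and_lt_rpow (fun j : ({i}ᶜ : Finset ι) => a j)
      (fun j => ha j) hc0 hc1,
    Finset.sum_coe_sort]

lemma measure_le_and_forall_lt_rpow_div_of_iIndepFun {ι : Type*} [Fintype ι] [DecidableEq ι]
    {U : ι → Ω → ℝ} (hU : iIndepFun U μ) (hmeas : ∀ j, Measurable (U j))
    (hlaw : ∀ j, μ.map (U j) = volume.restrict (Ioc 0 1)) (a : ι → ℝ) (ha : ∀ j, 0 ≤ a j)
    (i : ι) {c : ℝ} (hc0 : 0 ≤ c) (hc1 : c ≤ 1) :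
    μ {ω | U i ω ≤ c ∧ ∀ j, j ≠ i → U j ω < U i ω ^ a j} /
        μ {ω | U i ω ≤ 1 ∧ ∀ j, j ≠ i → U j ω < U i ω ^ a j} =
      ENNReal.ofReal (c ^ (∑ j ∈ {i}ᶜ, a j + 1)) := by
  have hs_pos : 0 < ∑ j ∈ {i}ᶜ, a j + 1 :=
    add_pos_of_nonneg_of_pos (Finset.sum_nonneg fun j _ => ha j) one_pos
  rw [measure_le_and_forall_lt_rpow_of_iIndepFun hU hmeas hlaw a ha i hc0 hc1,
    measure_le_and_forall_lt_rpow_of_iIndepFun hU hmeas hlaw a ha i zero_le_one le_rfl,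
    Real.one_rpow, ← ENNReal.ofReal_div_of_pos (one_div_pos.2 hs_pos)]
  congr 1
  field_simp

end

/-- Under CDF-based scheduling, the conditional SNR distribution of user `i`
given that it is selected is `[F_i(x)]^(1/α_i)` where `α_i = w_i / ∑ w_j`. -/
theorem cdf_scheduling_selected_snr_distribution {Ω : Type*} [MeasurableSpace Ω]
    (μ : Measure Ω) [IsProbabilityMeasure μ] (n : ℕ)
    (γ : Fin n → Ω → ℝ) (hγmeas : ∀ j, Measurable (γ j))
    (hindep : iIndepFun (m := fun _ => Real.measurableSpace) γ μ)
    (F : Fin n → ℝ → ℝ)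
    (hFmono : ∀ j, StrictMono (F j)) (hFcont : ∀ j, Continuous (F j))
    (hF01 : ∀ j x, F j x ∈ Set.Icc (0 : ℝ) 1)
    (hcdf : ∀ j x, μ {ω | γ j ω ≤ x} = ENNReal.ofReal (F j x))
    (w : Fin n → ℝ) (hw : ∀ j, 0 < w j) (i : Fin n)
    (α : ℝ) (hα : α = w i / ∑ j, w j) :
    ∀ x : ℝ,
      μ ({ω | γ i ω ≤ x} ∩
          {ω | ∀ j, j ≠ i → (F j (γ j ω)) ^ (1 / w j) < (F i (γ i ω)) ^ (1 / w i)}) /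
        μ {ω | ∀ j, j ≠ i → (F j (γ j ω)) ^ (1 / w j) < (F i (γ i ω)) ^ (1 / w i)}
      = ENNReal.ofReal ((F i x) ^ (1 / α)) := by
  intro x
  set U : Fin n → Ω → ℝ := fun j ω => F j (γ j ω)
  set sel := {ω | ∀ j, j ≠ i → (F j (γ j ω)) ^ (1 / w j) < (F i (γ i ω)) ^ (1 / w i)}
  have hU01 : ∀ j ω, U j ω ∈ Ioo 0 1 := fun j ω => (hFmono j).mem_Ioo_of_mem_Icc (hF01 j) _
  have hsel : ∀ ω, ω ∈ sel ↔ ∀ j, j ≠ i → U j ω < U i ω ^ (w j / w i) := fun ω =>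
    forall₂_congr fun j _ =>
      Real.rpow_one_div_lt_rpow_one_div_iff (hU01 j ω).1.le (hU01 i ω).1.le (hw j)
  have hnum : {ω | γ i ω ≤ x} ∩ sel =
      {ω | U i ω ≤ F i x ∧ ∀ j, j ≠ i → U j ω < U i ω ^ (w j / w i)} := by
    ext ω
    simp only [mem_inter_iff, mem_ofPred_eq, hsel, U, (hFmono i).le_iff_le]
  have hden : sel = {ω | U i ω ≤ 1 ∧ ∀ j, j ≠ i → U j ω < U i ω ^ (w j / w i)} := by
    ext ω
    simp only [mem_ofPred_eq, hsel, (hU01 i ω).2.le, true_and]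
  have hs : ∑ j ∈ {i}ᶜ, w j / w i + 1 = 1 / α := by
    rw [← Finset.sum_div, hα, Fintype.sum_eq_add_sum_compl i w]
    field_simp [(hw i).ne']
    ring
  rw [hnum, hden, measure_le_and_forall_lt_rpow_div_of_iIndepFun (U := U)
    (hindep.comp (fun j => F j) fun j => (hFcont j).measurable)
    (fun j => (hFcont j).measurable.comp (hγmeas j))
    (fun j => map_comp_eq_volume_restrict_Ioc (hγmeas j) (hFmono j) (hFcont j) (hF01 j) (hcdf j))
    (fun j => w j / w i) (fun j => (div_pos (hw j) (hw i)).le) i (hF01 i x).1 (hF01 i x).2, hs]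
end

section
/- For the universal throughput function S(x, α) = ∫_{F⁻¹(x)}^∞ R(γ) d[F(γ)]^{1/α}, the quantity α·S(x, α) is a nondecreasing function of α on (0, 1]. -/
open MeasureTheory intervalIntegral

/-- Universal throughput function `S(x, α) = ∫_{F⁻¹(x)}^∞ R(γ) d[F(γ)]^{1/α}`,
written after the substitution `u = F(γ)` as
`S(x, α) = ∫_x^1 R(F⁻¹(u)) (1/α) u^{1/α - 1} du`. -/
noncomputable def S (F R : ℝ → ℝ) (x α : ℝ) : ℝ :=
  ∫ u in x..(1 : ℝ), R (Function.invFun F u) * ((1 / α) * u ^ (1 / α - 1))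

/-- `α · S(x, α)` is nondecreasing in `α` on `(0, 1]`. -/
theorem alpha_mul_S_monotone (F R : ℝ → ℝ)
    (hFmono : StrictMono F) (hFcont : Continuous F)
    (hR0 : ∀ y, 0 ≤ R y) (hRmono : Monotone R)
    (x : ℝ) (hx : x ∈ Set.Icc (0 : ℝ) 1)
    (hint : ∀ a ∈ Set.Ioc (0 : ℝ) 1,
      IntervalIntegrable
        (fun u => R (Function.invFun F u) * ((1 / a) * u ^ (1 / a - 1))) volume x 1) :
    ∀ α₁ ∈ Set.Ioc (0 : ℝ) 1, ∀ α₂ ∈ Set.Ioc (0 : ℝ) 1, α₁ ≤ α₂ →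
      α₁ * S F R x α₁ ≤ α₂ * S F R x α₂ := by
  rintro α₁ ⟨h1a, h1b⟩ α₂ ⟨h2a, h2b⟩ h12
  have funeq : ∀ a : ℝ, 0 < a → (fun u : ℝ =>
      a * (R (Function.invFun F u) * ((1 / a) * u ^ (1 / a - 1)))) =
      fun u : ℝ => R (Function.invFun F u) * u ^ (1 / a - 1) := by
    intro a ha
    funext u
    field_simp
  have key : ∀ a : ℝ, 0 < a → a * S F R x a =
      ∫ u in x..(1 : ℝ), R (Function.invFun F u) * u ^ (1 / a - 1) := by
    intro a ha
    rw [S, ← intervalIntegral.integral_const_mul, funeq a ha]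
  have hi : ∀ a : ℝ, 0 < a → a ≤ 1 → IntervalIntegrable
      (fun u : ℝ => R (Function.invFun F u) * u ^ (1 / a - 1)) volume x 1 := by
    intro a ha hb
    have := (hint a ⟨ha, hb⟩).const_mul a
    rwa [funeq a ha] at this
  rw [key α₁ h1a, key α₂ h2a]
  refine intervalIntegral.integral_mono_on hx.2 (hi α₁ h1a h1b) (hi α₂ h2a h2b) ?_
  intro u hu
  have hu0 : 0 ≤ u := le_trans hx.1 hu.1
  have hu1 : u ≤ 1 := hu.2
  have he2 : 0 ≤ 1 / α₂ - 1 := by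
    have : 1 ≤ 1 / α₂ := one_le_one_div h2a h2b
    linarith
  have hee : 1 / α₂ - 1 ≤ 1 / α₁ - 1 := by
    have := one_div_le_one_div_of_le h1a h12
    linarith
  refine mul_le_mul_of_nonneg_left ?_ (hR0 _)
  rcases eq_or_lt_of_le hu0 with h0 | h0
  · rcases eq_or_lt_of_le he2 with h2 | h2
    · have h1 : 1 / α₁ - 1 = 0 ∨ 0 < 1 / α₁ - 1 := by
        rcases eq_or_lt_of_le (he2.trans hee) with h | h
        · exact Or.inl h.symm
        · exact Or.inr h
      rcases h1 with h1 | h1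
      · rw [← h0, h1, ← h2]
      · rw [← h0, Real.zero_rpow (ne_of_gt h1), ← h2, Real.rpow_zero]
        norm_num
    · rw [← h0, Real.zero_rpow (ne_of_gt (lt_of_lt_of_le h2 hee)),
        Real.zero_rpow (ne_of_gt h2)]
  · exact Real.rpow_le_rpow_of_exponent_ge h0 hu1 hee
end

section
/- If the rate function saturates, i.e., there exist R_th and γ₀ with R(γ) = R_th for all γ > γ₀, then the ratio of CDF-based scheduling throughput to the optimal throughput tends to 1 as α → 0: lim_{α→0} α S(0, α) / S(1-α, 1) = 1. -/
/-!
In the variable `u = F(γ)` the rate is `f(u) = R(F⁻¹(u))`, which is bounded by `R_th` and equals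
`R_th` on `(c, 1)` with `c = F(γ₀) < 1`. The optimal throughput `∫_{1-α}^1 f` is therefore
exactly `R_th α` once `α ≤ 1 - c`, while `α S(0, α) = ∫_0^1 f(u) u^{1/α - 1} du` lies between
the contribution `R_th α (1 - c^{1/α})` of `(c, 1)` and `R_th ∫_0^1 u^{1/α-1} du = R_th α`.
Since `c^{1/α} → 0` as `α → 0⁺`, the ratio is squeezed to `1`.
-/

open MeasureTheory intervalIntegral

open Set Filter Topology

lemma Monotone.le_of_eqOn_Ioi {R : ℝ → ℝ} {γ₀ M : ℝ} (hR : Monotone R)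
    (hsat : EqOn R (fun _ => M) (Ioi γ₀)) (y : ℝ) : R y ≤ M :=
  (hR (le_max_left y (γ₀ + 1))).trans_eq <|
    hsat ((lt_add_one γ₀).trans_le (le_max_right _ _))

lemma Monotone.eqOn_comp_invFun_of_eqOn_Ioi {F R : ℝ → ℝ} {γ₀ M : ℝ} (hF : Monotone F)
    (hsat : EqOn R (fun _ => M) (Ioi γ₀))
    (hinv : ∀ u ∈ Ioo (F γ₀) 1, F (Function.invFun F u) = u) :
    EqOn (fun u => R (Function.invFun F u)) (fun _ => M) (Ioo (F γ₀) 1) := fun u hu =>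
  hsat <| hF.reflect_lt <| by rw [hinv u hu]; exact hu.1

lemma integral_rpow_one_div_sub_one {α : ℝ} (hα : 0 < α) (a b : ℝ) :
    ∫ u in a..b, u ^ (1 / α - 1) = α * (b ^ (1 / α) - a ^ (1 / α)) := by
  rw [integral_rpow (Or.inl (by linarith [one_div_pos.2 hα])), sub_add_cancel]
  field_simp

lemma tendsto_rpow_one_div_nhdsGT_zero {c : ℝ} (hc0 : 0 ≤ c) (hc1 : c < 1) :
    Tendsto (fun α : ℝ => c ^ (1 / α)) (𝓝[>] 0) (𝓝 0) := by
  simp only [one_div]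
  exact (tendsto_rpow_atTop_of_base_lt_one c (by linarith) hc1).comp tendsto_inv_nhdsGT_zero

section WeightedIntegral

variable {f : ℝ → ℝ} {M c α : ℝ}

lemma integral_eq_of_eqOn_Ioo {a b : ℝ} (hab : a ≤ b) (hf : EqOn f (fun _ => M) (Ioo a b)) :
    ∫ u in a..b, f u = (b - a) * M := by
  rw [integral_congr_uIoo (by rwa [uIoo_of_le hab]), intervalIntegral.integral_const, smul_eq_mul]

lemma integral_mul_rpow_one_div_sub_one_le (hα : 0 < α) (hfM : ∀ u, f u ≤ M)
    (hint : IntervalIntegrable (fun u => f u * u ^ (1 / α - 1)) volume 0 1) :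
    ∫ u in (0 : ℝ)..1, f u * u ^ (1 / α - 1) ≤ M * α := by
  have hpow : IntervalIntegrable (fun u : ℝ => M * u ^ (1 / α - 1)) volume 0 1 :=
    (intervalIntegrable_rpow' (by linarith [one_div_pos.2 hα])).const_mul M
  calc ∫ u in (0 : ℝ)..1, f u * u ^ (1 / α - 1)
      ≤ ∫ u in (0 : ℝ)..1, M * u ^ (1 / α - 1) :=
        integral_mono_on zero_le_one hint hpow fun u hu =>
          mul_le_mul_of_nonneg_right (hfM u) (Real.rpow_nonneg hu.1 _)
    _ = M * α := by
        rw [intervalIntegral.integral_const_mul, integral_rpow_one_div_sub_one hα, Real.one_rpow,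
          Real.zero_rpow (one_div_pos.2 hα).ne', sub_zero, mul_one]

lemma le_integral_mul_rpow_one_div_sub_one (hα : 0 < α) (hc : c ∈ Icc 0 1)
    (hf0 : ∀ u, 0 ≤ f u) (hf : EqOn f (fun _ => M) (Ioo c 1))
    (hint : IntervalIntegrable (fun u => f u * u ^ (1 / α - 1)) volume 0 1) :
    M * α * (1 - c ^ (1 / α)) ≤ ∫ u in (0 : ℝ)..1, f u * u ^ (1 / α - 1) := by
  have htail : ∫ u in c..1, f u * u ^ (1 / α - 1) = ∫ u in c..1, M * u ^ (1 / α - 1) :=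
    integral_congr_uIoo <| by
      rw [uIoo_of_le hc.2]
      intro u hu
      simp only [hf hu]
  calc M * α * (1 - c ^ (1 / α)) = ∫ u in c..1, f u * u ^ (1 / α - 1) := by
        rw [htail, intervalIntegral.integral_const_mul, integral_rpow_one_div_sub_one hα,
          Real.one_rpow]
        ring
    _ ≤ ∫ u in (0 : ℝ)..1, f u * u ^ (1 / α - 1) :=
        integral_mono_interval hc.1 hc.2 le_rfl
          ((ae_restrict_iff' measurableSet_Ioc).2 <| ae_of_all _ fun u hu =>
            mul_nonneg (hf0 u) (Real.rpow_nonneg hu.1.le _)) hint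

end WeightedIntegral

lemma mul_one_div_mul_rpow {α : ℝ} (hα : α ≠ 0) (r u : ℝ) :
    α * (r * ((1 / α) * u ^ (1 / α - 1))) = r * u ^ (1 / α - 1) := by
  field_simp

lemma mul_S_zero_eq {F R : ℝ → ℝ} {α : ℝ} (hα : α ≠ 0) :
    α * S F R 0 α = ∫ u in (0 : ℝ)..1, R (Function.invFun F u) * u ^ (1 / α - 1) := by
  simp only [S, ← intervalIntegral.integral_const_mul, mul_one_div_mul_rpow hα]

theorem cdf_scheduling_achieves_upper_bound_general (F R : ℝ → ℝ)
    (hFmono : StrictMono F)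
    (hR0 : ∀ y, 0 ≤ R y) (hRmono : Monotone R)
    (hinv : ∀ u ∈ Set.Ioo (0 : ℝ) 1, F (Function.invFun F u) = u)
    (γ₀ Rth : ℝ) (hRth : 0 < Rth) (hsat : ∀ y, γ₀ < y → R y = Rth)
    (hFγ₀ : F γ₀ ∈ Set.Ico (0 : ℝ) 1)
    (hint : ∀ a ∈ Set.Ioc (0 : ℝ) 1,
      IntervalIntegrable
        (fun u => R (Function.invFun F u) * ((1 / a) * u ^ (1 / a - 1))) volume 0 1) :
    Filter.Tendsto
      (fun α => (α * S F R 0 α) / ∫ u in (1 - α)..(1 : ℝ), R (Function.invFun F u))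
      (nhdsWithin 0 (Set.Ioi 0)) (nhds 1) := by
  obtain ⟨hc0, hc1⟩ := hFγ₀
  have hflat := hFmono.monotone.eqOn_comp_invFun_of_eqOn_Ioi hsat
    fun u hu => hinv u ⟨hc0.trans_lt hu.1, hu.2⟩
  have hbounds : ∀ α ∈ Ioo 0 (1 - F γ₀),
      1 - F γ₀ ^ (1 / α) ≤ (α * S F R 0 α) / ∫ u in (1 - α)..1, R (Function.invFun F u) ∧
      (α * S F R 0 α) / ∫ u in (1 - α)..1, R (Function.invFun F u) ≤ 1 := by
    rintro α ⟨hα0, hαc⟩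
    have hint' := (hint α ⟨hα0, by linarith⟩).const_mul α
    simp only [mul_one_div_mul_rpow hα0.ne'] at hint'
    have hupper := integral_mul_rpow_one_div_sub_one_le hα0
      (fun _ => hRmono.le_of_eqOn_Ioi hsat _) hint'
    have hlower := le_integral_mul_rpow_one_div_sub_one hα0 ⟨hc0, hc1.le⟩
      (fun _ => hR0 _) hflat hint'
    have hden : 0 < Rth * α := mul_pos hRth hα0
    rw [mul_S_zero_eq hα0.ne', integral_eq_of_eqOn_Ioo (by linarith)
      (hflat.mono (Ioo_subset_Ioo_left (by linarith))), sub_sub_cancel, mul_comm α,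
      le_div_iff₀ hden, div_le_one hden]
    exact ⟨by linarith, hupper⟩
  have hsmall : ∀ᶠ α in 𝓝[>] (0 : ℝ), α ∈ Ioo 0 (1 - F γ₀) :=
    Ioo_mem_nhdsGT_of_mem ⟨le_rfl, by linarith⟩
  have hlower : Tendsto (fun α : ℝ => 1 - F γ₀ ^ (1 / α)) (𝓝[>] 0) (𝓝 1) := by
    simpa using (tendsto_rpow_one_div_nhdsGT_zero hc0 hc1).const_sub 1
  exact tendsto_of_tendsto_of_tendsto_of_le_of_le' hlower tendsto_const_nhds
    (hsmall.mono fun α hα => (hbounds α hα).1) (hsmall.mono fun α hα => (hbounds α hα).2)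

/-- If the rate function saturates (`R(γ) = R_th > 0` for `γ > γ₀`, with `F(γ₀) < 1`),
then the ratio of the CDF-based scheduling throughput `α S(0,α)` to the optimal
throughput `S(1-α, 1) = ∫_{F⁻¹(1-α)}^∞ R dF` tends to `1` as `α → 0⁺`. -/
theorem cdf_scheduling_achieves_upper_bound (F R : ℝ → ℝ)
    (hFmono : StrictMono F) (hFcont : Continuous F)
    (hR0 : ∀ y, 0 ≤ R y) (hRmono : Monotone R)
    (hinv : ∀ u ∈ Set.Ioo (0 : ℝ) 1, F (Function.invFun F u) = u)
    (γ₀ Rth : ℝ) (hRth : 0 < Rth) (hsat : ∀ y, γ₀ < y → R y = Rth)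
    (hFγ₀ : F γ₀ ∈ Set.Ico (0 : ℝ) 1)
    (hint : ∀ a ∈ Set.Ioc (0 : ℝ) 1,
      IntervalIntegrable
        (fun u => R (Function.invFun F u) * ((1 / a) * u ^ (1 / a - 1))) volume 0 1)
    (hint' : IntervalIntegrable (fun u => R (Function.invFun F u)) volume 0 1) :
    Filter.Tendsto
      (fun α => (α * S F R 0 α) / ∫ u in (1 - α)..(1 : ℝ), R (Function.invFun F u))
      (nhdsWithin 0 (Set.Ioi 0)) (nhds 1) :=
  cdf_scheduling_achieves_upper_bound_general F R hFmono hR0 hRmono hinv γ₀ Rth hRth hsat hFγ₀ hint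
end

section
/- In the threshold-based feedback scheme where user i feeds back iff U_i^{1/w_i} > η_th with η_th = p^{1/Σ_j w_j}, the probability that no user feeds back equals p, and conditioned on at least one feedback, the probability that user i has the maximum of U_j^{1/w_j} equals α_i = w_i/Σ_j w_j. -/
/-!
The variables `V j = U j ^ (1 / w j)` are independent with `P(V j < s) = s ^ w j` on `[0, 1]`,
so nobody exceeds `η` with probability `η ^ ∑ w = p`. Conditioning on `U i = t`, user `i` is
the maximum above `η` iff `t > η ^ w i` and every other `V j < t ^ (1 / w i)`, which has
probability `t ^ ((W - w i) / w i)` with `W = ∑ w`; integrating over `t ∈ (η ^ w i, 1]` gives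
`(w i / W) (1 - η ^ W) = (w i / W) (1 - p)`.
-/

open MeasureTheory ProbabilityTheory Set

noncomputable def uniform01 : Measure ℝ := volume.restrict (Icc 0 1)

instance : IsProbabilityMeasure uniform01 :=
  ⟨by simp [uniform01]⟩

theorem uniform01_Iic (x : ℝ) : uniform01 (Iic x) = ENNReal.ofReal (min x 1) := by
  have hset : Iic x ∩ Icc 0 1 = Icc 0 (min x 1) := by
    ext u; simp only [mem_inter_iff, mem_Iic, mem_Icc, le_min_iff]; tauto
  rw [uniform01, Measure.restrict_apply measurableSet_Iic, hset, Real.volume_Icc, sub_zero]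

theorem map_eq_uniform01 {Ω : Type*} [MeasurableSpace Ω] {μ : Measure Ω}
    [IsProbabilityMeasure μ] {X : Ω → ℝ} (hX : Measurable X)
    (hcdf : ∀ u ∈ Icc (0 : ℝ) 1, μ {ω | X ω ≤ u} = ENNReal.ofReal u) :
    μ.map X = uniform01 := by
  have : IsProbabilityMeasure (μ.map X) := Measure.isProbabilityMeasure_map hX.aemeasurable
  refine Measure.ext_of_Iic _ _ fun x => ?_
  rw [Measure.map_apply hX measurableSet_Iic, uniform01_Iic]
  change μ {ω | X ω ≤ x} = _
  rcases lt_or_ge x 0 with hx0 | hx0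
  · rw [ENNReal.ofReal_of_nonpos (min_le_of_left_le hx0.le)]
    have hnull : μ {ω | X ω ≤ 0} = 0 := by rw [hcdf 0 (by simp), ENNReal.ofReal_zero]
    exact measure_mono_null (fun ω (h : X ω ≤ x) => h.trans hx0.le) hnull
  rcases le_or_gt x 1 with hx1 | hx1
  · rw [hcdf x ⟨hx0, hx1⟩, min_eq_left hx1]
  · refine le_antisymm (by simpa [min_eq_right hx1.le] using prob_le_one) ?_
    calc ENNReal.ofReal (min x 1) = μ {ω | X ω ≤ 1} := by
          rw [min_eq_right hx1.le, hcdf 1 (by simp)]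
      _ ≤ μ {ω | X ω ≤ x} := measure_mono fun ω (h : X ω ≤ 1) => h.trans hx1.le

theorem measure_preimage_eq_pi_uniform01 {Ω ι : Type*} [MeasurableSpace Ω] [Fintype ι]
    {μ : Measure Ω} [IsProbabilityMeasure μ] {U : ι → Ω → ℝ} (hUmeas : ∀ j, Measurable (U j))
    (hindep : iIndepFun U μ)
    (hunif : ∀ j, ∀ u ∈ Icc (0 : ℝ) 1, μ {ω | U j ω ≤ u} = ENNReal.ofReal u)
    {s : Set (ι → ℝ)} (hs : MeasurableSet s) :
    μ ((fun ω j => U j ω) ⁻¹' s) = Measure.pi (fun _ => uniform01) s := by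
  rw [← Measure.map_apply (measurable_pi_lambda _ hUmeas) hs,
    hindep.map_fun_eq_pi_map fun j => (hUmeas j).aemeasurable]
  exact congrArg (fun ν : Measure (ι → ℝ) => ν s)
    (congrArg Measure.pi (funext fun j => map_eq_uniform01 (hUmeas j) (hunif j)))

theorem uniform01_rpow_inv_lt {v s : ℝ} (hv : 0 < v) (hs0 : 0 ≤ s) (hs1 : s ≤ 1) :
    uniform01 {u | u ^ (1 / v) < s} = ENNReal.ofReal (s ^ v) := by
  have hmeas : MeasurableSet {u : ℝ | u ^ (1 / v) < s} := by measurability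
  have hset : {u : ℝ | u ^ (1 / v) < s} ∩ Icc 0 1 = Ico 0 (s ^ v) := by
    ext u
    simp only [mem_inter_iff, mem_ofPred_eq, mem_Icc, mem_Ico, one_div]
    constructor
    · rintro ⟨hu, hu0, -⟩
      exact ⟨hu0, (Real.rpow_inv_lt_iff_of_pos hu0 hs0 hv).1 hu⟩
    · rintro ⟨hu0, hu⟩
      exact ⟨(Real.rpow_inv_lt_iff_of_pos hu0 hs0 hv).2 hu, hu0,
        hu.le.trans (Real.rpow_le_one hs0 hs1 hv.le)⟩
  rw [uniform01, Measure.restrict_apply hmeas, hset, Real.volume_Ico, sub_zero]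

theorem pi_uniform01_forall_rpow_inv_lt {ι : Type*} [Fintype ι] {v : ι → ℝ} (hv : ∀ k, 0 < v k)
    {s : ℝ} (hs0 : 0 ≤ s) (hs1 : s ≤ 1) :
    Measure.pi (fun _ => uniform01) {y : ι → ℝ | ∀ k, y k ^ (1 / v k) < s}
      = ENNReal.ofReal (s ^ ∑ k, v k) := by
  have hset : {y : ι → ℝ | ∀ k, y k ^ (1 / v k) < s}
      = univ.pi fun k => {u : ℝ | u ^ (1 / v k) < s} := by
    ext y; simp
  rw [hset, Measure.pi_pi, Real.rpow_sum_of_nonneg hs0 fun k _ => (hv k).le,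
    ENNReal.ofReal_prod_of_nonneg fun k _ => Real.rpow_nonneg hs0 _]
  exact Finset.prod_congr rfl fun k _ => uniform01_rpow_inv_lt (hv k) hs0 hs1

theorem setLIntegral_Ioc_ofReal_rpow {a b c : ℝ} (ha : 0 ≤ a) (hab : a ≤ b) (hc : -1 < c) :
    ∫⁻ t in Ioc a b, ENNReal.ofReal (t ^ c)
      = ENNReal.ofReal ((b ^ (c + 1) - a ^ (c + 1)) / (c + 1)) := by
  have hnonneg : 0 ≤ᵐ[volume.restrict (Ioc a b)] fun t : ℝ => t ^ c := by
    filter_upwards [self_mem_ae_restrict measurableSet_Ioc] with t ht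
    exact Real.rpow_nonneg (ha.trans ht.1.le) c
  rw [← ofReal_integral_eq_lintegral_ofReal
      (intervalIntegral.intervalIntegrable_rpow' hc).1 hnonneg,
    ← intervalIntegral.integral_of_le hab, integral_rpow (Or.inl hc)]

theorem pi_uniform01_slice {ι : Type*} [Fintype ι] {v : ι → ℝ} (hv : ∀ k, 0 < v k)
    {a η t : ℝ} (ha : 0 < a) (hη0 : 0 < η) (ht0 : 0 ≤ t) (ht1 : t ≤ 1) :
    Measure.pi (fun _ => uniform01) {y : ι → ℝ | η < t ^ (1 / a) ∧
        ∀ k, y k ^ (1 / v k) < t ^ (1 / a)}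
      = (Ioi (η ^ a)).indicator (fun t => ENNReal.ofReal (t ^ ((∑ k, v k) / a))) t := by
  have hiff : η < t ^ (1 / a) ↔ t ∈ Ioi (η ^ a) := by
    rw [one_div, Real.lt_rpow_inv_iff_of_pos hη0.le ht0 ha, mem_Ioi]
  by_cases hηt : η < t ^ (1 / a)
  · simp only [hηt, true_and, indicator_of_mem (hiff.1 hηt)]
    rw [pi_uniform01_forall_rpow_inv_lt hv (Real.rpow_nonneg ht0 _)
      (Real.rpow_le_one ht0 ht1 (one_div_pos.2 ha).le), ← Real.rpow_mul ht0, one_div,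
      inv_mul_eq_div]
  · simp only [hηt, false_and, ofPred_false, measure_empty,
      indicator_of_notMem (hiff.not.1 hηt)]

theorem pi_uniform01_argmax_above {m : ℕ} {w : Fin (m + 1) → ℝ} (hw : ∀ j, 0 < w j)
    (i : Fin (m + 1)) {η : ℝ} (hη0 : 0 < η) (hη1 : η ≤ 1) :
    Measure.pi (fun _ => uniform01) ({x | η < x i ^ (1 / w i)} ∩
        {x | ∀ j, j ≠ i → x j ^ (1 / w j) < x i ^ (1 / w i)})
      = ENNReal.ofReal (w i / (∑ j, w j) * (1 - η ^ ∑ j, w j)) := by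
  set W := ∑ j, w j
  set B : Set (Fin (m + 1) → ℝ) := {x | η < x i ^ (1 / w i)} ∩
    {x | ∀ j, j ≠ i → x j ^ (1 / w j) < x i ^ (1 / w i)}
  set e := MeasurableEquiv.piFinSuccAbove (fun _ : Fin (m + 1) => ℝ) i
  have hBmeas : MeasurableSet B := by measurability
  have hsum : ∑ k, w (i.succAbove k) = W - w i := by
    simp only [W, Fin.sum_univ_succAbove w i]; ring
  have hslice : ∀ t ∈ Icc (0 : ℝ) 1,
      Measure.pi (fun _ : Fin m => uniform01) (Prod.mk t ⁻¹' (e.symm ⁻¹' B))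
        = (Ioi (η ^ w i)).indicator (fun t => ENNReal.ofReal (t ^ ((W - w i) / w i))) t := by
    rintro t ⟨ht0, ht1⟩
    have hset : Prod.mk t ⁻¹' (e.symm ⁻¹' B) = {y | η < t ^ (1 / w i) ∧
        ∀ k, y k ^ (1 / w (i.succAbove k)) < t ^ (1 / w i)} := by
      ext y
      simp [B, e, Fin.forall_iff_succAbove i, Fin.succAbove_ne]
    rw [hset, pi_uniform01_slice (fun k => hw _) (hw i) hη0 ht0 ht1, hsum]
  have hW : 0 < W := Finset.sum_pos (fun j _ => hw j) Finset.univ_nonempty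
  have hexp : (W - w i) / w i + 1 = W / w i := by rw [div_add_one (hw i).ne', sub_add_cancel]
  have hexp0 : 0 ≤ (W - w i) / w i :=
    div_nonneg (hsum ▸ Finset.sum_nonneg fun k _ => (hw _).le) (hw i).le
  have hpow0 : 0 ≤ η ^ w i := Real.rpow_nonneg hη0.le _
  have hIoc : Ioi (η ^ w i) ∩ Icc 0 1 = Ioc (η ^ w i) 1 := by
    ext u
    simp only [mem_inter_iff, mem_Ioi, mem_Icc, mem_Ioc]
    exact ⟨fun h => ⟨h.1, h.2.2⟩, fun h => ⟨h.1, hpow0.trans h.1.le, h.2⟩⟩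
  rw [← (measurePreserving_piFinSuccAbove (fun _ => uniform01) i).symm.measure_preimage
      hBmeas.nullMeasurableSet, Measure.prod_apply (e.symm.measurable hBmeas)]
  change ∫⁻ t in Icc (0 : ℝ) 1, _ = _
  rw [setLIntegral_congr_fun measurableSet_Icc hslice, lintegral_indicator measurableSet_Ioi,
    Measure.restrict_restrict measurableSet_Ioi, hIoc, setLIntegral_Ioc_ofReal_rpow hpow0
      (Real.rpow_le_one hη0.le hη1 (hw i).le) (by linarith), hexp, Real.one_rpow,
    ← Real.rpow_mul hη0.le, mul_div_cancel₀ _ (hw i).ne']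
  congr 1
  field_simp

/-- Threshold-based feedback with a single threshold `η_th = p^{1/∑ w_j}`:
the probability that no user feeds back is `p`, and conditioned on at least one
feedback, user `i` has the largest `U_j^{1/w_j}` with probability `α_i = w_i/∑ w_j`. -/
theorem threshold_feedback_access_ratio {Ω : Type*} [MeasurableSpace Ω]
    (μ : Measure Ω) [IsProbabilityMeasure μ] (n : ℕ)
    (U : Fin n → Ω → ℝ) (hUmeas : ∀ i, Measurable (U i))
    (hindep : iIndepFun (m := fun _ => Real.measurableSpace) U μ)
    (hunif : ∀ i, ∀ u ∈ Set.Icc (0 : ℝ) 1, μ {ω | U i ω ≤ u} = ENNReal.ofReal u)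
    (w : Fin n → ℝ) (hw : ∀ i, 0 < w i)
    (p : ℝ) (hp : p ∈ Set.Ioo (0 : ℝ) 1)
    (η : ℝ) (hη : η = p ^ (1 / ∑ j, w j)) (i : Fin n) :
    μ {ω | ∀ j, (U j ω) ^ (1 / w j) < η} = ENNReal.ofReal p ∧
    μ ({ω | η < (U i ω) ^ (1 / w i)} ∩
        {ω | ∀ j, j ≠ i → (U j ω) ^ (1 / w j) < (U i ω) ^ (1 / w i)}) /
      μ {ω | ∀ j, (U j ω) ^ (1 / w j) < η}ᶜ
      = ENNReal.ofReal (w i / ∑ j, w j) := by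
  obtain ⟨m, rfl⟩ : ∃ m, n = m + 1 := ⟨n - 1, by have := i.pos; omega⟩
  obtain ⟨hp0, hp1⟩ := hp
  have hW : 0 < ∑ j, w j := Finset.sum_pos (fun j _ => hw j) Finset.univ_nonempty
  have hη0 : 0 < η := hη ▸ Real.rpow_pos_of_pos hp0 _
  have hη1 : η ≤ 1 := hη ▸ Real.rpow_le_one hp0.le hp1.le (by positivity)
  have hηW : η ^ ∑ j, w j = p := by
    rw [hη, ← Real.rpow_mul hp0.le, one_div_mul_cancel hW.ne', Real.rpow_one]
  have hA : MeasurableSet {x : Fin (m + 1) → ℝ | ∀ j, x j ^ (1 / w j) < η} := by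
    measurability
  have hnone : μ {ω | ∀ j, (U j ω) ^ (1 / w j) < η} = ENNReal.ofReal p := by
    rw [← hηW, ← pi_uniform01_forall_rpow_inv_lt hw hη0.le hη1]
    exact measure_preimage_eq_pi_uniform01 hUmeas hindep hunif hA
  have hmax : μ ({ω | η < (U i ω) ^ (1 / w i)} ∩
      {ω | ∀ j, j ≠ i → (U j ω) ^ (1 / w j) < (U i ω) ^ (1 / w i)})
      = ENNReal.ofReal (w i / (∑ j, w j) * (1 - p)) := by
    rw [← hηW, ← pi_uniform01_argmax_above hw i hη0 hη1]
    have hB : MeasurableSet ({x : Fin (m + 1) → ℝ | η < x i ^ (1 / w i)} ∩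
        {x | ∀ j, j ≠ i → x j ^ (1 / w j) < x i ^ (1 / w i)}) := by
      measurability
    exact measure_preimage_eq_pi_uniform01 hUmeas hindep hunif hB
  have hsome : μ {ω | ∀ j, (U j ω) ^ (1 / w j) < η}ᶜ = ENNReal.ofReal (1 - p) := by
    have hmeas : MeasurableSet {ω | ∀ j, (U j ω) ^ (1 / w j) < η} :=
      measurable_pi_lambda _ hUmeas hA
    rw [prob_compl_eq_one_sub hmeas, hnone, ← ENNReal.ofReal_one,
      ← ENNReal.ofReal_sub _ hp0.le]
  refine ⟨hnone, ?_⟩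
  rw [hmax, hsome, ENNReal.ofReal_mul (div_nonneg (hw i).le hW.le)]
  exact ENNReal.mul_div_cancel_right (ENNReal.ofReal_pos.2 (sub_pos.2 hp1)).ne'
    ENNReal.ofReal_ne_top
end

section
/- Under CDF-based scheduling with feedback reduction (threshold p^α for a user with access ratio α), the conditional SNR distribution of the user given it is selected is F_Sel(γ) = p^{1-α} F(γ) for 0 < γ < F⁻¹(p^α), and F_Sel(γ) = [F(γ)]^{1/α} for γ ≥ F⁻¹(p^α). -/
/-!
Put `U j = F j ∘ γ j`. By the probability integral transform the `U j` are independent and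
uniform on `(0, 1)`, so the metric `U j ^ (1 / w j)` of user `j` has distribution function
`z ^ w j` and no user exceeds `η` with probability `η ^ ∑ w = p`. Conditionally on `U i = s`,
user `i` beats every other user with probability `s ^ ((∑ w - w i) / w i)`; integrating over
`s ∈ (p ^ α, b]` gives `α (b ^ (1 / α) - p)`. Hence user `i` is selected with probability
`α (1 - p) + p α = α`, and jointly with `γ i ≤ x`, i.e. `U i ≤ b := F i x`, with probability
`α p ^ (1 - α) b` when `b < p ^ α` (only the round-robin branch is possible) and
`α b ^ (1 / α)` otherwise.
-/

open MeasureTheory ProbabilityTheory Set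
open scoped ENNReal

lemma Real.rpow_one_div_rpow {x : ℝ} (hx : 0 ≤ x) (a y : ℝ) :
    (x ^ (1 / a)) ^ y = x ^ (y / a) := by
  rw [← Real.rpow_mul hx, one_div_mul_eq_div]

lemma Real.rpow_div_rpow_div_cancel {x a b : ℝ} (hx : 0 ≤ x) (ha : a ≠ 0) (hb : b ≠ 0) :
    (x ^ (a / b)) ^ (b / a) = x := by
  rw [← Real.rpow_mul hx, div_mul_div_cancel₀ hb, div_self ha, Real.rpow_one]

lemma Real.volume_Iic_inter_Ioo_zero_one (a : ℝ) :
    volume (Iic a ∩ Ioo 0 1) = ENNReal.ofReal (min a 1) := by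
  rw [measure_congr ((Iio_ae_eq_Iic (μ := volume)).symm.inter (ae_eq_refl (Ioo (0 : ℝ) 1))),
    Iio_inter_Ioo, Real.volume_Ioo, sub_zero]

lemma lintegral_Ioc_ofReal_rpow {a b c : ℝ} (ha : 0 ≤ a) (hab : a ≤ b) (hc : 0 ≤ c) :
    ∫⁻ s in Ioc a b, ENNReal.ofReal (s ^ c) =
      ENNReal.ofReal ((b ^ (c + 1) - a ^ (c + 1)) / (c + 1)) := by
  have hint : IntegrableOn (fun s : ℝ => s ^ c) (Ioc a b) :=
    (Real.continuous_rpow_const hc).integrableOn_Icc.mono_set Ioc_subset_Icc_self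
  rw [← ofReal_integral_eq_lintegral_ofReal hint
      (ae_restrict_of_forall_mem measurableSet_Ioc fun s hs =>
        Real.rpow_nonneg (ha.trans hs.1.le) c),
    ← intervalIntegral.integral_of_le hab, integral_rpow (Or.inl (by linarith))]

lemma StrictMono.mem_Ioo_of_mem_Icc_s16 {F : ℝ → ℝ} (hFmono : StrictMono F)
    (hF01 : ∀ x, F x ∈ Icc 0 1) (x : ℝ) : F x ∈ Ioo 0 1 :=
  ⟨(hF01 (x - 1)).1.trans_lt (hFmono (by linarith)),
    (hFmono (lt_add_one x)).trans_le (hF01 (x + 1)).2⟩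

section

variable {Ω : Type*} [MeasurableSpace Ω] {μ : Measure Ω}

section ProbabilityIntegralTransform

variable [IsProbabilityMeasure μ] {g : Ω → ℝ} {F : ℝ → ℝ}

lemma cdf_map_eq_of_measure_le_eq (hg : Measurable g) (hF01 : ∀ x, F x ∈ Icc 0 1)
    (hcdf : ∀ x, μ {ω | g ω ≤ x} = ENNReal.ofReal (F x)) : ⇑(cdf (μ.map g)) = F := by
  have := Measure.isProbabilityMeasure_map (μ := μ) hg.aemeasurable
  ext x
  rw [cdf_eq_real, measureReal_def, Measure.map_apply hg measurableSet_Iic]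
  exact (congrArg ENNReal.toReal (hcdf x)).trans (ENNReal.toReal_ofReal (hF01 x).1)

lemma mem_range_of_measure_le_eq (hg : Measurable g) (hFcont : Continuous F)
    (hF01 : ∀ x, F x ∈ Icc 0 1) (hcdf : ∀ x, μ {ω | g ω ≤ x} = ENNReal.ofReal (F x))
    {u : ℝ} (hu : u ∈ Ioo 0 1) : u ∈ range F := by
  have hF := cdf_map_eq_of_measure_le_eq hg hF01 hcdf
  have hbot := hF ▸ tendsto_cdf_atBot (μ.map g)
  have htop := hF ▸ tendsto_cdf_atTop (μ.map g)
  exact mem_range_of_exists_le_of_exists_ge hFcont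
    (hbot.eventually (Iic_mem_nhds hu.1)).exists
    (htop.eventually (Ici_mem_nhds hu.2)).exists

theorem map_comp_eq_uniform_of_measure_le_eq (hg : Measurable g) (hFmono : StrictMono F)
    (hFcont : Continuous F) (hF01 : ∀ x, F x ∈ Icc 0 1)
    (hcdf : ∀ x, μ {ω | g ω ≤ x} = ENNReal.ofReal (F x)) :
    μ.map (fun ω => F (g ω)) = volume.restrict (Ioo 0 1) := by
  have hFg : Measurable fun ω => F (g ω) := hFcont.measurable.comp hg
  have := Measure.isProbabilityMeasure_map (μ := μ) hFg.aemeasurable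
  refine Measure.ext_of_Iic _ _ fun a => ?_
  rw [Measure.map_apply hFg measurableSet_Iic, Measure.restrict_apply measurableSet_Iic,
    Real.volume_Iic_inter_Ioo_zero_one]
  have hFIoo := hFmono.mem_Ioo_of_mem_Icc_s16 hF01
  rcases le_or_gt a 0 with ha0 | ha0
  · have hempty : (fun ω => F (g ω)) ⁻¹' Iic a = ∅ :=
      eq_empty_of_forall_notMem fun ω (hω : F (g ω) ≤ a) =>
        (hFIoo (g ω)).1.not_ge (hω.trans ha0)
    rw [hempty, measure_empty, eq_comm, ENNReal.ofReal_eq_zero]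
    exact (min_le_left a 1).trans ha0
  rcases le_or_gt 1 a with ha1 | ha1
  · have huniv : (fun ω => F (g ω)) ⁻¹' Iic a = univ :=
      eq_univ_of_forall fun ω => (hFIoo (g ω)).2.le.trans ha1
    rw [huniv, measure_univ, min_eq_right ha1, ENNReal.ofReal_one]
  obtain ⟨t, rfl⟩ := mem_range_of_measure_le_eq hg hFcont hF01 hcdf ⟨ha0, ha1⟩
  have hpre : (fun ω => F (g ω)) ⁻¹' Iic (F t) = {ω | g ω ≤ t} := by
    ext ω
    exact hFmono.le_iff_le
  rw [hpre, hcdf, min_eq_left ha1.le]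

end ProbabilityIntegralTransform

lemma ProbabilityTheory.IndepFun.measure_preimage_prodMk_eq_lintegral [IsFiniteMeasure μ]
    {α β : Type*} [MeasurableSpace α] [MeasurableSpace β] {X : Ω → α} {Y : Ω → β}
    (hXY : IndepFun X Y μ) (hX : Measurable X) (hY : Measurable Y)
    {S : Set (α × β)} (hS : MeasurableSet S) :
    μ ((fun ω => (X ω, Y ω)) ⁻¹' S) = ∫⁻ x, μ.map Y (Prod.mk x ⁻¹' S) ∂μ.map X := by
  rw [← Measure.map_apply (hX.prodMk hY) hS,
    (indepFun_iff_map_prod_eq_prod_map_map hX.aemeasurable hY.aemeasurable).mp hXY,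
    Measure.prod_apply hS]

lemma ProbabilityTheory.iIndepFun.indepFun_compl_singleton {ι β : Type*} [Fintype ι]
    [DecidableEq ι] [MeasurableSpace β] {f : ι → Ω → β} (hind : iIndepFun f μ)
    (hf : ∀ j, Measurable (f j)) (i : ι) :
    IndepFun (f i) (fun ω (j : ({i}ᶜ : Finset ι)) => f j ω) μ :=
  (hind.indepFun_finset {i} {i}ᶜ disjoint_compl_right hf).comp
    (φ := fun v : ({i} : Finset ι) → β => v ⟨i, Finset.mem_singleton_self i⟩)
    (measurable_pi_apply _) measurable_id

lemma measure_preimage_of_map_eq_uniform {X : Ω → ℝ} (hX : Measurable X)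
    (hlaw : μ.map X = volume.restrict (Ioo 0 1)) {A : Set ℝ} (hA : MeasurableSet A) :
    μ (X ⁻¹' A) = volume (A ∩ Ioo 0 1) := by
  rw [← Measure.map_apply hX hA, hlaw, Measure.restrict_apply hA]

structure IsIndepUniform {ι : Type*} (U : ι → Ω → ℝ) (μ : Measure Ω) : Prop where
  measurable : ∀ j, Measurable (U j)
  mem_Icc : ∀ j ω, U j ω ∈ Icc 0 1
  map_eq : ∀ j, μ.map (U j) = volume.restrict (Ioo 0 1)
  iIndepFun : iIndepFun U μ

section WeightedRace

variable {ι : Type*} {U : ι → Ω → ℝ} {w : ι → ℝ}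

lemma IsIndepUniform.measurable_restrict (hU : IsIndepUniform U μ) (s : Finset ι) :
    Measurable fun ω (j : s) => U j ω :=
  measurable_pi_lambda _ fun j => hU.measurable j

lemma measure_forall_rpow_lt (hU : IsIndepUniform U μ) (hw : ∀ j, 0 < w j) (s : Finset ι)
    {z : ℝ} (hz0 : 0 ≤ z) (hz1 : z ≤ 1) :
    μ {ω | ∀ j ∈ s, U j ω ^ (1 / w j) < z} = ENNReal.ofReal (z ^ ∑ j ∈ s, w j) := by
  have hset : {ω | ∀ j ∈ s, U j ω ^ (1 / w j) < z} = ⋂ j ∈ s, U j ⁻¹' Iio (z ^ w j) := by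
    ext ω
    simp only [mem_ofPred_eq, mem_iInter, mem_preimage, mem_Iio, one_div]
    exact forall₂_congr fun j _ => Real.rpow_inv_lt_iff_of_pos (hU.mem_Icc j ω).1 hz0 (hw j)
  rw [hset, hU.iIndepFun.meas_biInter fun j _ => ⟨Iio _, measurableSet_Iio, rfl⟩,
    Real.rpow_sum_of_nonneg hz0 fun j _ => (hw j).le,
    ENNReal.ofReal_prod_of_nonneg fun j _ => Real.rpow_nonneg hz0 _]
  refine Finset.prod_congr rfl fun j _ => ?_
  rw [measure_preimage_of_map_eq_uniform (hU.measurable j) (hU.map_eq j) measurableSet_Iio,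
    Iio_inter_Ioo, Real.volume_Ioo, sub_zero, min_eq_left (Real.rpow_le_one hz0 hz1 (hw j).le)]

variable [Fintype ι] [DecidableEq ι]

lemma measure_map_compl_singleton_forall_rpow_lt (hU : IsIndepUniform U μ) (hw : ∀ j, 0 < w j)
    (i : ι) {z : ℝ} (hz0 : 0 ≤ z) (hz1 : z ≤ 1) :
    μ.map (fun ω (j : ({i}ᶜ : Finset ι)) => U j ω) {y | ∀ j, y j ^ (1 / w j) < z} =
      ENNReal.ofReal (z ^ (∑ j, w j - w i)) := by
  rw [Measure.map_apply (hU.measurable_restrict _) (by measurability),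
    ← Finset.sum_erase_eq_sub (Finset.mem_univ i), ← Finset.compl_singleton,
    ← measure_forall_rpow_lt hU hw _ hz0 hz1]
  congr 1
  ext ω
  simp

lemma measure_le_and_forall_ne_rpow_lt (hU : IsIndepUniform U μ) (hw : ∀ j, 0 < w j) (i : ι)
    {b z : ℝ} (hb0 : 0 ≤ b) (hb1 : b ≤ 1) (hz0 : 0 ≤ z) (hz1 : z ≤ 1) :
    μ {ω | U i ω ≤ b ∧ ∀ j, j ≠ i → U j ω ^ (1 / w j) < z} =
      ENNReal.ofReal (b * z ^ (∑ j, w j - w i)) := by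
  set Y := fun ω (j : ({i}ᶜ : Finset ι)) => U j ω
  have hset : {ω | U i ω ≤ b ∧ ∀ j, j ≠ i → U j ω ^ (1 / w j) < z} =
      U i ⁻¹' Iic b ∩ Y ⁻¹' {y | ∀ j, y j ^ (1 / w j) < z} := by
    ext ω
    simp [Y]
  rw [hset, (hU.iIndepFun.indepFun_compl_singleton hU.measurable i).measure_inter_preimage_eq_mul
      _ _ measurableSet_Iic (by measurability),
    measure_preimage_of_map_eq_uniform (hU.measurable i) (hU.map_eq i) measurableSet_Iic,
    ← Measure.map_apply (hU.measurable_restrict _) (by measurability),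
    measure_map_compl_singleton_forall_rpow_lt hU hw i hz0 hz1,
    Real.volume_Iic_inter_Ioo_zero_one, min_eq_left hb1, ← ENNReal.ofReal_mul hb0]

/- Conditionally on `U i = s`, each other user `j` stays below `s ^ (1 / w i)` with probability
`s ^ (w j / w i)`; integrate the product `s ^ ((∑ w - w i) / w i)` against the law of `U i`. -/
lemma measure_mem_Ioc_and_race_win [IsProbabilityMeasure μ] (hU : IsIndepUniform U μ)
    (hw : ∀ j, 0 < w j) (i : ι) {a b : ℝ} (ha : 0 ≤ a) (hab : a ≤ b) (hb : b ≤ 1) :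
    μ {ω | U i ω ∈ Ioc a b ∧ ∀ j, j ≠ i → U j ω ^ (1 / w j) < U i ω ^ (1 / w i)} =
      ENNReal.ofReal (w i / (∑ j, w j) *
        (b ^ ((∑ j, w j) / w i) - a ^ ((∑ j, w j) / w i))) := by
  set c := (∑ j, w j - w i) / w i
  set S := {q : ℝ × (({i}ᶜ : Finset ι) → ℝ) |
    q.1 ∈ Ioc a b ∧ ∀ j, q.2 j ^ (1 / w j) < q.1 ^ (1 / w i)}
  have hset : {ω | U i ω ∈ Ioc a b ∧ ∀ j, j ≠ i → U j ω ^ (1 / w j) < U i ω ^ (1 / w i)} =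
      (fun ω => (U i ω, fun j : ({i}ᶜ : Finset ι) => U j ω)) ⁻¹' S := by
    ext ω
    simp [S]
  have hslice (s : ℝ) : μ.map (fun ω (j : ({i}ᶜ : Finset ι)) => U j ω) (Prod.mk s ⁻¹' S) =
      (Ioc a b).indicator (fun s => ENNReal.ofReal (s ^ c)) s := by
    by_cases hs : s ∈ Ioc a b
    · have hs0 : 0 ≤ s := ha.trans hs.1.le
      have hslice : Prod.mk s ⁻¹' S =
          {y : ({i}ᶜ : Finset ι) → ℝ | ∀ j, y j ^ (1 / w j) < s ^ (1 / w i)} := by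
        ext y
        simp only [S, mem_preimage, mem_ofPred_eq, hs, true_and]
      rw [hslice, measure_map_compl_singleton_forall_rpow_lt hU hw i (Real.rpow_nonneg hs0 _)
          (Real.rpow_le_one hs0 (hs.2.trans hb) (one_div_nonneg.2 (hw i).le)),
        indicator_of_mem hs, Real.rpow_one_div_rpow hs0]
    · have hslice : Prod.mk s ⁻¹' S = ∅ := by
        ext y
        simp only [S, mem_preimage, mem_ofPred_eq, hs, false_and, mem_empty_iff_false]
      rw [hslice, measure_empty, indicator_of_notMem hs]
  have hc : 0 ≤ c := div_nonneg (sub_nonneg.2 (Finset.single_le_sum (fun j _ => (hw j).le)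
    (Finset.mem_univ i))) (hw i).le
  have hc1 : c + 1 = (∑ j, w j) / w i := by
    have := (hw i).ne'
    simp only [c]
    field_simp
    ring
  have hindep := hU.iIndepFun.indepFun_compl_singleton hU.measurable i
  rw [hset, hindep.measure_preimage_prodMk_eq_lintegral (hU.measurable i)
      (hU.measurable_restrict _) (by measurability), hU.map_eq i,
    lintegral_congr hslice, Measure.restrict_congr_set Ioo_ae_eq_Ioc,
    lintegral_indicator measurableSet_Ioc, Measure.restrict_restrict measurableSet_Ioc,
    Ioc_inter_Ioc, max_eq_left ha, min_eq_left hb, lintegral_Ioc_ofReal_rpow ha hab hc, hc1,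
    div_div_eq_mul_div]
  congr 1
  ring

end WeightedRace

end

namespace CDFScheduling

variable {Ω ι : Type*}

def feedbackWin (U : ι → Ω → ℝ) (w : ι → ℝ) (η : ℝ) (i : ι) : Set Ω :=
  {ω | η < U i ω ^ (1 / w i) ∧ ∀ j, j ≠ i → U j ω ^ (1 / w j) < U i ω ^ (1 / w i)}

def noFeedback (U : ι → Ω → ℝ) (w : ι → ℝ) (η : ℝ) : Set Ω :=
  {ω | ∀ j, U j ω ^ (1 / w j) < η}

/-- User `i` is scheduled: either it feeds back and has the largest metric, or nobody feeds
back and the round-robin variable `V` points at `i`. -/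
def selected (U : ι → Ω → ℝ) (w : ι → ℝ) (η : ℝ) (V : Ω → ι) (i : ι) : Set Ω :=
  feedbackWin U w η i ∪ (noFeedback U w η ∩ {ω | V ω = i})

lemma disjoint_feedbackWin_noFeedback (U : ι → Ω → ℝ) (w : ι → ℝ) (η : ℝ) (i : ι) :
    Disjoint (feedbackWin U w η i) (noFeedback U w η) :=
  disjoint_left.2 fun _ hwin hno => (hwin.1.trans (hno i)).false

variable [MeasurableSpace Ω] {μ : Measure Ω} [Fintype ι] {U : ι → Ω → ℝ} {w : ι → ℝ} {p : ℝ}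

lemma measurableSet_feedbackWin (hU : ∀ j, Measurable (U j)) (w : ι → ℝ) (η : ℝ) (i : ι) :
    MeasurableSet (feedbackWin U w η i) := by
  unfold feedbackWin
  measurability

lemma measure_noFeedback [Nonempty ι] (hU : IsIndepUniform U μ) (hw : ∀ j, 0 < w j)
    (hp : p ∈ Icc 0 1) :
    μ (noFeedback U w (p ^ (1 / ∑ j, w j))) = ENNReal.ofReal p := by
  have hW : 0 < ∑ j, w j := Finset.sum_pos (fun j _ => hw j) Finset.univ_nonempty
  have h := measure_forall_rpow_lt hU hw Finset.univ (z := p ^ (1 / ∑ j, w j))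
    (Real.rpow_nonneg hp.1 _) (Real.rpow_le_one hp.1 hp.2 (by positivity))
  rw [Real.rpow_one_div_rpow hp.1, div_self hW.ne', Real.rpow_one] at h
  simpa [noFeedback] using h

variable {i : ι}

lemma measure_le_inter_feedbackWin [IsProbabilityMeasure μ] [DecidableEq ι]
    (hU : IsIndepUniform U μ) (hw : ∀ j, 0 < w j) (hp : 0 ≤ p) {b : ℝ}
    (hb : p ^ (w i / ∑ j, w j) ≤ b) (hb1 : b ≤ 1) :
    μ ({ω | U i ω ≤ b} ∩ feedbackWin U w (p ^ (1 / ∑ j, w j)) i) =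
      ENNReal.ofReal (w i / (∑ j, w j) * (b ^ ((∑ j, w j) / w i) - p)) := by
  have hW : 0 < ∑ j, w j := Finset.sum_pos (fun j _ => hw j) ⟨i, Finset.mem_univ i⟩
  have hset : {ω | U i ω ≤ b} ∩ feedbackWin U w (p ^ (1 / ∑ j, w j)) i =
      {ω | U i ω ∈ Ioc (p ^ (w i / ∑ j, w j)) b ∧
        ∀ j, j ≠ i → U j ω ^ (1 / w j) < U i ω ^ (1 / w i)} := by
    ext ω
    simp only [feedbackWin, mem_inter_iff, mem_ofPred_eq, mem_Ioc, one_div (w i),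
      Real.lt_rpow_inv_iff_of_pos (Real.rpow_nonneg hp _) (hU.mem_Icc i ω).1 (hw i),
      Real.rpow_one_div_rpow hp]
    tauto
  rw [hset, measure_mem_Ioc_and_race_win hU hw i (Real.rpow_nonneg hp _) hb hb1,
    Real.rpow_div_rpow_div_cancel hp (hw i).ne' hW.ne']

variable [MeasurableSpace ι] [MeasurableSingletonClass ι] {V : Ω → ι}

lemma measure_noFeedback_inter [Nonempty ι] (hU : IsIndepUniform U μ) (hw : ∀ j, 0 < w j)
    (hp : p ∈ Icc 0 1) (hV : IndepFun (fun ω j => U j ω) V μ) {α : ℝ}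
    (hVlaw : μ {ω | V ω = i} = ENNReal.ofReal α) :
    μ (noFeedback U w (p ^ (1 / ∑ j, w j)) ∩ {ω | V ω = i}) = ENNReal.ofReal (p * α) := by
  rw [ENNReal.ofReal_mul hp.1, ← measure_noFeedback hU hw hp, ← hVlaw]
  exact hV.measure_inter_preimage_eq_mul {y | ∀ j, y j ^ (1 / w j) < p ^ (1 / ∑ j, w j)} {i}
    (by measurability) (measurableSet_singleton i)

variable [DecidableEq ι]

lemma measure_le_and_forall_ne_rpow_lt_inter (hU : IsIndepUniform U μ) (hw : ∀ j, 0 < w j)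
    (hp : p ∈ Icc 0 1) (hV : IndepFun (fun ω j => U j ω) V μ)
    (hVlaw : μ {ω | V ω = i} = ENNReal.ofReal (w i / ∑ j, w j)) {b : ℝ} (hb0 : 0 ≤ b)
    (hb1 : b ≤ 1) :
    μ ({ω | U i ω ≤ b ∧ ∀ j, j ≠ i → U j ω ^ (1 / w j) < p ^ (1 / ∑ j, w j)} ∩
        {ω | V ω = i}) =
      ENNReal.ofReal (p ^ (1 - w i / ∑ j, w j) * b * (w i / ∑ j, w j)) := by
  have hW : 0 < ∑ j, w j := Finset.sum_pos (fun j _ => hw j) ⟨i, Finset.mem_univ i⟩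
  have hexp : (∑ j, w j - w i) / ∑ j, w j = 1 - w i / ∑ j, w j := by
    field_simp
  have hη : p ^ (1 / ∑ j, w j) ∈ Icc 0 1 :=
    ⟨Real.rpow_nonneg hp.1 _, Real.rpow_le_one hp.1 hp.2 (by positivity)⟩
  calc _ = μ {ω | U i ω ≤ b ∧ ∀ j, j ≠ i → U j ω ^ (1 / w j) < p ^ (1 / ∑ j, w j)} *
        μ {ω | V ω = i} :=
      hV.measure_inter_preimage_eq_mul
        {y | y i ≤ b ∧ ∀ j, j ≠ i → y j ^ (1 / w j) < p ^ (1 / ∑ j, w j)} {i}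
        (by measurability) (measurableSet_singleton i)
    _ = _ := by
      rw [measure_le_and_forall_ne_rpow_lt hU hw i hb0 hb1 hη.1 hη.2,
        Real.rpow_one_div_rpow hp.1, hexp, hVlaw,
        ← ENNReal.ofReal_mul (mul_nonneg hb0 (Real.rpow_nonneg hp.1 _))]
      ring_nf

lemma measure_selected [IsProbabilityMeasure μ] (hU : IsIndepUniform U μ) (hw : ∀ j, 0 < w j)
    (hp : p ∈ Icc 0 1) (hV : IndepFun (fun ω j => U j ω) V μ)
    (hVlaw : μ {ω | V ω = i} = ENNReal.ofReal (w i / ∑ j, w j)) :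
    μ (selected U w (p ^ (1 / ∑ j, w j)) V i) = ENNReal.ofReal (w i / ∑ j, w j) := by
  have : Nonempty ι := ⟨i⟩
  have hW : 0 < ∑ j, w j := Finset.sum_pos (fun j _ => hw j) Finset.univ_nonempty
  have hα : 0 ≤ w i / ∑ j, w j := div_nonneg (hw i).le hW.le
  have hwin : feedbackWin U w (p ^ (1 / ∑ j, w j)) i =
      {ω | U i ω ≤ 1} ∩ feedbackWin U w (p ^ (1 / ∑ j, w j)) i :=
    (inter_eq_right.2 fun ω _ => (hU.mem_Icc i ω).2).symm
  rw [selected, measure_union' ((disjoint_feedbackWin_noFeedback _ _ _ _).mono_right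
      inter_subset_left) (measurableSet_feedbackWin hU.measurable _ _ _), hwin,
    measure_le_inter_feedbackWin hU hw hp.1 (Real.rpow_le_one hp.1 hp.2 hα) le_rfl,
    measure_noFeedback_inter hU hw hp hV hVlaw, Real.one_rpow,
    ← ENNReal.ofReal_add (mul_nonneg hα (sub_nonneg.2 hp.2)) (mul_nonneg hp.1 hα)]
  ring_nf

lemma measure_le_inter_selected_of_lt (hU : IsIndepUniform U μ) (hw : ∀ j, 0 < w j)
    (hp : p ∈ Icc 0 1) (hV : IndepFun (fun ω j => U j ω) V μ)
    (hVlaw : μ {ω | V ω = i} = ENNReal.ofReal (w i / ∑ j, w j)) {b : ℝ} (hb0 : 0 ≤ b)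
    (hb : b < p ^ (w i / ∑ j, w j)) :
    μ ({ω | U i ω ≤ b} ∩ selected U w (p ^ (1 / ∑ j, w j)) V i) =
      ENNReal.ofReal (p ^ (1 - w i / ∑ j, w j) * b * (w i / ∑ j, w j)) := by
  have hW : 0 < ∑ j, w j := Finset.sum_pos (fun j _ => hw j) ⟨i, Finset.mem_univ i⟩
  have hlow {ω} (h : U i ω ≤ b) : U i ω ^ (1 / w i) < p ^ (1 / ∑ j, w j) := by
    rw [one_div (w i), Real.rpow_inv_lt_iff_of_pos (hU.mem_Icc i ω).1
      (Real.rpow_nonneg hp.1 _) (hw i), Real.rpow_one_div_rpow hp.1]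
    exact h.trans_lt hb
  have hset : {ω | U i ω ≤ b} ∩ selected U w (p ^ (1 / ∑ j, w j)) V i =
      {ω | U i ω ≤ b ∧ ∀ j, j ≠ i → U j ω ^ (1 / w j) < p ^ (1 / ∑ j, w j)} ∩
        {ω | V ω = i} := by
    ext ω
    simp only [selected, feedbackWin, noFeedback, mem_inter_iff, mem_union, mem_ofPred_eq]
    constructor
    · rintro ⟨hb, ⟨hwin, -⟩ | ⟨hno, hVi⟩⟩
      · exact absurd hwin (hlow hb).not_gt
      · exact ⟨⟨hb, fun j _ => hno j⟩, hVi⟩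
    · rintro ⟨⟨hb, hno⟩, hVi⟩
      refine ⟨hb, Or.inr ⟨fun j => ?_, hVi⟩⟩
      obtain rfl | hj := eq_or_ne j i
      exacts [hlow hb, hno j hj]
  rw [hset, measure_le_and_forall_ne_rpow_lt_inter hU hw hp hV hVlaw hb0
    (hb.le.trans (Real.rpow_le_one hp.1 hp.2 (div_nonneg (hw i).le hW.le)))]

lemma measure_le_inter_selected_of_ge [IsProbabilityMeasure μ] (hU : IsIndepUniform U μ)
    (hw : ∀ j, 0 < w j) (hp : p ∈ Icc 0 1) (hV : IndepFun (fun ω j => U j ω) V μ)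
    (hVlaw : μ {ω | V ω = i} = ENNReal.ofReal (w i / ∑ j, w j)) {b : ℝ}
    (hb : p ^ (w i / ∑ j, w j) ≤ b) (hb1 : b ≤ 1) :
    μ ({ω | U i ω ≤ b} ∩ selected U w (p ^ (1 / ∑ j, w j)) V i) =
      ENNReal.ofReal (b ^ ((∑ j, w j) / w i) * (w i / ∑ j, w j)) := by
  have : Nonempty ι := ⟨i⟩
  have hW : 0 < ∑ j, w j := Finset.sum_pos (fun j _ => hw j) Finset.univ_nonempty
  have hα : 0 ≤ w i / ∑ j, w j := div_nonneg (hw i).le hW.le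
  set η := p ^ (1 / ∑ j, w j)
  have hno : noFeedback U w η ∩ {ω | V ω = i} ⊆ {ω | U i ω ≤ b} := fun ω hω => by
    have hlow := hω.1 i
    rw [one_div (w i), Real.rpow_inv_lt_iff_of_pos (hU.mem_Icc i ω).1
      (Real.rpow_nonneg hp.1 _) (hw i), Real.rpow_one_div_rpow hp.1] at hlow
    exact hlow.le.trans hb
  have hunion : {ω | U i ω ≤ b} ∩ selected U w η V i =
      ({ω | U i ω ≤ b} ∩ feedbackWin U w η i) ∪ (noFeedback U w η ∩ {ω | V ω = i}) := by
    rw [selected, inter_union_distrib_left, inter_eq_right.2 hno]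
  have hpb : p ≤ b ^ ((∑ j, w j) / w i) := by
    have := Real.rpow_le_rpow (Real.rpow_nonneg hp.1 _) hb (div_nonneg hW.le (hw i).le)
    rwa [Real.rpow_div_rpow_div_cancel hp.1 (hw i).ne' hW.ne'] at this
  rw [hunion, measure_union' ((disjoint_feedbackWin_noFeedback U w η i).mono
      inter_subset_right inter_subset_left)
      ((measurableSet_le (hU.measurable i) measurable_const).inter
        (measurableSet_feedbackWin hU.measurable w η i)),
    measure_le_inter_feedbackWin hU hw hp.1 hb hb1, measure_noFeedback_inter hU hw hp hV hVlaw,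
    ← ENNReal.ofReal_add (mul_nonneg hα (sub_nonneg.2 hpb)) (mul_nonneg hp.1 hα)]
  ring_nf

theorem measure_le_inter_selected_div_measure_selected [IsProbabilityMeasure μ]
    (hU : IsIndepUniform U μ) (hw : ∀ j, 0 < w j) (hp : p ∈ Icc 0 1)
    (hV : IndepFun (fun ω j => U j ω) V μ)
    (hVlaw : μ {ω | V ω = i} = ENNReal.ofReal (w i / ∑ j, w j)) {b : ℝ} (hb : b ∈ Icc 0 1) :
    (b < p ^ (w i / ∑ j, w j) →
      μ ({ω | U i ω ≤ b} ∩ selected U w (p ^ (1 / ∑ j, w j)) V i) /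
          μ (selected U w (p ^ (1 / ∑ j, w j)) V i) =
        ENNReal.ofReal (p ^ (1 - w i / ∑ j, w j) * b)) ∧
    (p ^ (w i / ∑ j, w j) ≤ b →
      μ ({ω | U i ω ≤ b} ∩ selected U w (p ^ (1 / ∑ j, w j)) V i) /
          μ (selected U w (p ^ (1 / ∑ j, w j)) V i) =
        ENNReal.ofReal (b ^ (1 / (w i / ∑ j, w j)))) := by
  have hα : 0 < w i / ∑ j, w j :=
    div_pos (hw i) (Finset.sum_pos (fun j _ => hw j) ⟨i, Finset.mem_univ i⟩)
  have hcancel (t : ℝ) :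
      ENNReal.ofReal (t * (w i / ∑ j, w j)) / ENNReal.ofReal (w i / ∑ j, w j) =
        ENNReal.ofReal t := by
    rw [← ENNReal.ofReal_div_of_pos hα, mul_div_cancel_right₀ _ hα.ne']
  rw [measure_selected hU hw hp hV hVlaw]
  refine ⟨fun hlt => ?_, fun hge => ?_⟩
  · rw [measure_le_inter_selected_of_lt hU hw hp hV hVlaw hb.1 hlt, hcancel]
  · rw [measure_le_inter_selected_of_ge hU hw hp hV hVlaw hge hb.2, hcancel, one_div_div]

end CDFScheduling

theorem cdf_scheduling_feedback_reduction_selected_distribution_general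
    {Ω : Type*} [MeasurableSpace Ω]
    (μ : Measure Ω) [IsProbabilityMeasure μ] (n : ℕ)
    (γ : Fin n → Ω → ℝ) (hγmeas : ∀ j, Measurable (γ j))
    (hindep : iIndepFun (m := fun _ => Real.measurableSpace) γ μ)
    (F : Fin n → ℝ → ℝ)
    (hFmono : ∀ j, StrictMono (F j)) (hFcont : ∀ j, Continuous (F j))
    (hF01 : ∀ j x, F j x ∈ Set.Icc (0 : ℝ) 1)
    (hcdf : ∀ j x, μ {ω | γ j ω ≤ x} = ENNReal.ofReal (F j x))
    (w : Fin n → ℝ) (hw : ∀ j, 0 < w j)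
    (p : ℝ) (hp : p ∈ Set.Ioo (0 : ℝ) 1)
    (η : ℝ) (hη : η = p ^ (1 / ∑ j, w j))
    (V : Ω → Fin n)
    (hVindep : IndepFun (fun ω j => γ j ω) V μ)
    (hVlaw : ∀ j, μ {ω | V ω = j} = ENNReal.ofReal (w j / ∑ k, w k))
    (i : Fin n) (α : ℝ) (hα : α = w i / ∑ j, w j) :
    ∀ x : ℝ,
      (F i x < p ^ α →
        μ ({ω | γ i ω ≤ x} ∩
            (({ω | η < (F i (γ i ω)) ^ (1 / w i) ∧
                ∀ j, j ≠ i → (F j (γ j ω)) ^ (1 / w j) < (F i (γ i ω)) ^ (1 / w i)}) ∪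
              ({ω | ∀ j, (F j (γ j ω)) ^ (1 / w j) < η} ∩ {ω | V ω = i}))) /
          μ (({ω | η < (F i (γ i ω)) ^ (1 / w i) ∧
                ∀ j, j ≠ i → (F j (γ j ω)) ^ (1 / w j) < (F i (γ i ω)) ^ (1 / w i)}) ∪
              ({ω | ∀ j, (F j (γ j ω)) ^ (1 / w j) < η} ∩ {ω | V ω = i}))
          = ENNReal.ofReal (p ^ (1 - α) * F i x)) ∧
      (p ^ α ≤ F i x →
        μ ({ω | γ i ω ≤ x} ∩
            (({ω | η < (F i (γ i ω)) ^ (1 / w i) ∧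
                ∀ j, j ≠ i → (F j (γ j ω)) ^ (1 / w j) < (F i (γ i ω)) ^ (1 / w i)}) ∪
              ({ω | ∀ j, (F j (γ j ω)) ^ (1 / w j) < η} ∩ {ω | V ω = i}))) /
          μ (({ω | η < (F i (γ i ω)) ^ (1 / w i) ∧
                ∀ j, j ≠ i → (F j (γ j ω)) ^ (1 / w j) < (F i (γ i ω)) ^ (1 / w i)}) ∪
              ({ω | ∀ j, (F j (γ j ω)) ^ (1 / w j) < η} ∩ {ω | V ω = i}))
          = ENNReal.ofReal ((F i x) ^ (1 / α))) := by
  intro x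
  subst hη hα
  have hU : IsIndepUniform (fun j ω => F j (γ j ω)) μ :=
    { measurable := fun j => (hFcont j).measurable.comp (hγmeas j)
      mem_Icc := fun j ω => hF01 j (γ j ω)
      map_eq := fun j => map_comp_eq_uniform_of_measure_le_eq (hγmeas j) (hFmono j) (hFcont j)
        (hF01 j) (hcdf j)
      iIndepFun := hindep.comp (fun j => F j) fun j => (hFcont j).measurable }
  have hV : IndepFun (fun ω j => F j (γ j ω)) V μ :=
    hVindep.comp (φ := fun (y : Fin n → ℝ) j => F j (y j)) (by fun_prop) measurable_id
  have hle : {ω | γ i ω ≤ x} = {ω | F i (γ i ω) ≤ F i x} := by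
    ext ω
    exact (hFmono i).le_iff_le.symm
  rw [hle]
  exact CDFScheduling.measure_le_inter_selected_div_measure_selected hU hw
    ⟨hp.1.le, hp.2.le⟩ hV (hVlaw i) (hF01 i x)

/-- With CDF-based scheduling and threshold-based feedback reduction (threshold
`η = p^{1/∑ w_j}`, so user `i`'s effective threshold on `U_i` is `p^{α_i}`), the
conditional SNR distribution of user `i` given that it is selected is
`p^{1-α} F(γ)` below `F⁻¹(p^α)` and `[F(γ)]^{1/α}` above it.  In no-feedback slots
a user is chosen by an independent round-robin/random variable `V` with
`Pr{V = j} = α_j`. -/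
theorem cdf_scheduling_feedback_reduction_selected_distribution
    {Ω : Type*} [MeasurableSpace Ω]
    (μ : Measure Ω) [IsProbabilityMeasure μ] (n : ℕ)
    (γ : Fin n → Ω → ℝ) (hγmeas : ∀ j, Measurable (γ j))
    (hindep : iIndepFun (m := fun _ => Real.measurableSpace) γ μ)
    (F : Fin n → ℝ → ℝ)
    (hFmono : ∀ j, StrictMono (F j)) (hFcont : ∀ j, Continuous (F j))
    (hF01 : ∀ j x, F j x ∈ Set.Icc (0 : ℝ) 1)
    (hcdf : ∀ j x, μ {ω | γ j ω ≤ x} = ENNReal.ofReal (F j x))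
    (w : Fin n → ℝ) (hw : ∀ j, 0 < w j)
    (p : ℝ) (hp : p ∈ Set.Ioo (0 : ℝ) 1)
    (η : ℝ) (hη : η = p ^ (1 / ∑ j, w j))
    (V : Ω → Fin n) (hVmeas : Measurable V)
    (hVindep : IndepFun (fun ω j => γ j ω) V μ)
    (hVlaw : ∀ j, μ {ω | V ω = j} = ENNReal.ofReal (w j / ∑ k, w k))
    (i : Fin n) (α : ℝ) (hα : α = w i / ∑ j, w j) :
    ∀ x : ℝ,
      (F i x < p ^ α →
        μ ({ω | γ i ω ≤ x} ∩
            (({ω | η < (F i (γ i ω)) ^ (1 / w i) ∧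
                ∀ j, j ≠ i → (F j (γ j ω)) ^ (1 / w j) < (F i (γ i ω)) ^ (1 / w i)}) ∪
              ({ω | ∀ j, (F j (γ j ω)) ^ (1 / w j) < η} ∩ {ω | V ω = i}))) /
          μ (({ω | η < (F i (γ i ω)) ^ (1 / w i) ∧
                ∀ j, j ≠ i → (F j (γ j ω)) ^ (1 / w j) < (F i (γ i ω)) ^ (1 / w i)}) ∪
              ({ω | ∀ j, (F j (γ j ω)) ^ (1 / w j) < η} ∩ {ω | V ω = i}))
          = ENNReal.ofReal (p ^ (1 - α) * F i x)) ∧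
      (p ^ α ≤ F i x →
        μ ({ω | γ i ω ≤ x} ∩
            (({ω | η < (F i (γ i ω)) ^ (1 / w i) ∧
                ∀ j, j ≠ i → (F j (γ j ω)) ^ (1 / w j) < (F i (γ i ω)) ^ (1 / w i)}) ∪
              ({ω | ∀ j, (F j (γ j ω)) ^ (1 / w j) < η} ∩ {ω | V ω = i}))) /
          μ (({ω | η < (F i (γ i ω)) ^ (1 / w i) ∧
                ∀ j, j ≠ i → (F j (γ j ω)) ^ (1 / w j) < (F i (γ i ω)) ^ (1 / w i)}) ∪
              ({ω | ∀ j, (F j (γ j ω)) ^ (1 / w j) < η} ∩ {ω | V ω = i}))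
          = ENNReal.ofReal ((F i x) ^ (1 / α))) :=
  cdf_scheduling_feedback_reduction_selected_distribution_general μ n γ hγmeas hindep F hFmono
    hFcont hF01 hcdf w hw p hp η hη V hVindep hVlaw i α hα
end

section
/- The function S(x^α, α) + x^{1-α} S_L(x^α, 1) is nonincreasing in x on [0,1] for fixed α ∈ (0,1), where S_L(y, 1) = ∫₀^{F⁻¹(y)} R(γ) dF(γ); consequently the feedback-reduced throughput S_CS-FR(α, p) = α[S(p^α, α) + p^{1-α} S_L(p^α, 1)] is nonincreasing in the no-feedback probability p and satisfies S_CS-FR(α, p) ≤ S_CS(α). -/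
/-!
Write `Q = R ∘ F⁻¹`. Since `F` is strictly increasing, `Q` is nondecreasing on the range of `F` and
constant off it, so by continuity it is nondecreasing on all of `[0, 1]`. By the fundamental
theorem of calculus the derivative of `S(x^α, α) + x^{1-α} S_L(x^α, 1)` in `x` is
`(1 - α) (x^{-α} ∫₀^{x^α} Q - Q(x^α))`, i.e. `1 - α` times the mean of `Q` over `[0, x^α]` minus
its value at the right endpoint, hence `≤ 0`. The bound by `S_CS(α)` is the value at `p = 0`.
-/

open MeasureTheory intervalIntegral

/-- `S_L(y, 1) = ∫₀^{F⁻¹(y)} R dF = ∫₀^y R(F⁻¹(u)) du`. -/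
noncomputable def SL (F R : ℝ → ℝ) (y : ℝ) : ℝ :=
  ∫ u in (0 : ℝ)..y, R (Function.invFun F u)

open Set

theorem IsPreconnected.exists_mem_closure_inter_closure_diff {X : Type*} [TopologicalSpace X]
    {s T : Set X} (hs : IsPreconnected s) (hin : (s ∩ T).Nonempty) (hout : (s \ T).Nonempty) :
    ∃ x ∈ s, x ∈ closure (s ∩ T) ∧ x ∈ closure (s \ T) := by
  have hcover : s ⊆ closure (s ∩ T) ∪ closure (s \ T) := fun y hy => by
    by_cases hyT : y ∈ T
    · exact Or.inl (subset_closure ⟨hy, hyT⟩)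
    · exact Or.inr (subset_closure ⟨hy, hyT⟩)
  obtain ⟨x, hx, hxin, hxout⟩ := isPreconnected_closed_iff.1 hs _ _ isClosed_closure
    isClosed_closure hcover (hin.mono fun y hy => ⟨hy.1, subset_closure hy⟩)
    (hout.mono fun y hy => ⟨hy.1, subset_closure hy⟩)
  exact ⟨x, hx, hxin, hxout⟩

/-- At a point where the closures of `[u, v] ∩ T` and `[u, v] \ T` meet, both constraints on `f`
pass to the limit. -/
theorem ContinuousOn.monotoneOn_Icc_of_eq_off {f : ℝ → ℝ} {T : Set ℝ} {a b : ℝ}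
    (hf : ContinuousOn f (Icc a b)) (hT : MonotoneOn f T)
    (hTc : ∀ s ∉ T, ∀ t ∉ T, f s = f t) : MonotoneOn f (Icc a b) := by
  intro u hu v hv huv
  have hcont : ∀ x ∈ Icc u v, ∀ A ⊆ Icc u v, ContinuousWithinAt f A x := fun x hx A hA =>
    (hf x (Icc_subset_Icc hu.1 hv.2 hx)).mono (hA.trans (Icc_subset_Icc hu.1 hv.2))
  have hu' : u ∈ Icc u v := left_mem_Icc.2 huv
  have hv' : v ∈ Icc u v := right_mem_Icc.2 huv
  by_cases huT : u ∈ T <;> by_cases hvT : v ∈ T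
  · exact hT huT hvT huv
  · obtain ⟨x, hx, hxin, hxout⟩ := isPreconnected_Icc.exists_mem_closure_inter_closure_diff
      ⟨u, hu', huT⟩ ⟨v, hv', hvT⟩
    calc f u ≤ f x := ContinuousWithinAt.closure_le hxin continuousWithinAt_const
          (hcont x hx _ inter_subset_left) fun y hy => hT huT hy.2 hy.1.1
      _ ≤ f v := ContinuousWithinAt.closure_le hxout (hcont x hx _ sdiff_subset)
          continuousWithinAt_const fun y hy => (hTc y hy.2 v hvT).le
  · obtain ⟨x, hx, hxin, hxout⟩ := isPreconnected_Icc.exists_mem_closure_inter_closure_diff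
      ⟨v, hv', hvT⟩ ⟨u, hu', huT⟩
    calc f u ≤ f x := ContinuousWithinAt.closure_le hxout continuousWithinAt_const
          (hcont x hx _ sdiff_subset) fun y hy => (hTc u huT y hy.2).le
      _ ≤ f v := ContinuousWithinAt.closure_le hxin (hcont x hx _ inter_subset_left)
          continuousWithinAt_const fun y hy => hT hy.2 hvT hy.1.2
  · exact (hTc u huT v hvT).le

theorem monotoneOn_comp_invFun {F R : ℝ → ℝ} {a b : ℝ} (hF : StrictMono F) (hR : Monotone R)
    (hQ : ContinuousOn (fun u => R (Function.invFun F u)) (Icc a b)) :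
    MonotoneOn (fun u => R (Function.invFun F u)) (Icc a b) := by
  refine hQ.monotoneOn_Icc_of_eq_off (T := range F) ?_ ?_
  · rintro _ ⟨s, rfl⟩ _ ⟨t, rfl⟩ hst
    simp only [Function.leftInverse_invFun hF.injective _]
    exact hR (hF.le_iff_le.1 hst)
  · intro s hs t ht
    simp only [Function.invFun_neg (by simpa using hs), Function.invFun_neg (by simpa using ht)]

theorem intervalIntegral_le_mul_of_monotoneOn {Q : ℝ → ℝ} {a b : ℝ} (hab : a ≤ b)
    (hQ : MonotoneOn Q (Icc a b)) : ∫ u in a..b, Q u ≤ (b - a) * Q b := by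
  have hQi : IntervalIntegrable Q volume a b :=
    MonotoneOn.intervalIntegrable (by rwa [uIcc_of_le hab])
  calc ∫ u in a..b, Q u ≤ ∫ _ in a..b, Q b :=
        integral_mono_on hab hQi intervalIntegrable_const
          fun u hu => hQ hu (right_mem_Icc.2 hab) hu.2
    _ = (b - a) * Q b := by rw [intervalIntegral.integral_const, smul_eq_mul]

/-- In terms of `Q = R ∘ F⁻¹`, `frThroughput Q α p` is `S(p^α, α) + p^{1-α} S_L(p^α, 1)`,
that is `S_CS-FR(α, p) / α`. -/
noncomputable def frThroughput (Q : ℝ → ℝ) (α x : ℝ) : ℝ :=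
  (∫ u in x ^ α..1, Q u * ((1 / α) * u ^ (1 / α - 1))) + x ^ (1 - α) * ∫ u in 0..x ^ α, Q u

section frThroughput

variable {Q : ℝ → ℝ} {α : ℝ}

theorem continuousOn_frThroughput (hQ : ContinuousOn Q (Icc 0 1)) (hα0 : 0 < α) (hα1 : α ≤ 1) :
    ContinuousOn (frThroughput Q α) (Icc 0 1) := by
  have hpow : ∀ β : ℝ, 0 ≤ β → ContinuousOn (fun x : ℝ => x ^ β) (Icc 0 1) := fun β hβ =>
    (Real.continuous_rpow_const hβ).continuousOn
  have hmaps : MapsTo (fun x : ℝ => x ^ α) (Icc 0 1) (Icc 0 1) := fun x hx =>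
    ⟨Real.rpow_nonneg hx.1 α, Real.rpow_le_one hx.1 hx.2 hα0.le⟩
  have hweight : 0 ≤ 1 / α - 1 := by rw [sub_nonneg, le_div_iff₀ hα0]; linarith
  have hg : ContinuousOn (fun u => Q u * ((1 / α) * u ^ (1 / α - 1))) (uIcc 0 1) := by
    rw [uIcc_of_le zero_le_one]
    exact hQ.mul (continuousOn_const.mul (hpow _ hweight))
  have hQ' : ContinuousOn Q (uIcc 0 1) := by rwa [uIcc_of_le zero_le_one]
  have hS := continuousOn_primitive_interval_left (hg.integrableOn_uIcc (μ := volume))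
  have hSL := continuousOn_primitive_interval (hQ'.integrableOn_uIcc (μ := volume))
  rw [uIcc_of_le zero_le_one] at hS hSL
  exact (hS.comp (hpow α hα0.le) hmaps).add
    ((hpow (1 - α) (by linarith)).mul (hSL.comp (hpow α hα0.le) hmaps))

theorem hasDerivAt_frThroughput (hQ : ContinuousOn Q (Icc 0 1)) (hα : 0 < α) {x : ℝ}
    (hx : x ∈ Ioo 0 1) :
    HasDerivAt (frThroughput Q α)
      ((1 - α) * (x ^ (-α) * (∫ u in 0..x ^ α, Q u) - Q (x ^ α))) x := by
  set g : ℝ → ℝ := fun u => Q u * ((1 / α) * u ^ (1 / α - 1)) with hg_def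
  have hx0 : 0 < x := hx.1
  have hy : x ^ α ∈ Ioo 0 1 := ⟨Real.rpow_pos_of_pos hx0 α, Real.rpow_lt_one hx0.le hx.2 hα⟩
  have hQo : ContinuousOn Q (Ioo 0 1) := hQ.mono Ioo_subset_Icc_self
  have hgo : ContinuousOn g (Ioc 0 1) := (hQ.mono Ioc_subset_Icc_self).mul
    (continuousOn_const.mul fun u hu =>
      (Real.continuousAt_rpow_const u _ (.inl hu.1.ne')).continuousWithinAt)
  have hS : HasDerivAt (fun t => ∫ u in t..1, g u) (-g (x ^ α)) (x ^ α) :=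
    integral_hasDerivAt_left
      ((hgo.mono fun u hu => ⟨hy.1.trans_le hu.1, hu.2⟩).intervalIntegrable_of_Icc hy.2.le)
      ((hgo.mono Ioo_subset_Ioc_self).stronglyMeasurableAtFilter isOpen_Ioo _ hy)
      ((hgo.mono Ioo_subset_Ioc_self).continuousAt (isOpen_Ioo.mem_nhds hy))
  have hSL : HasDerivAt (fun t => ∫ u in 0..t, Q u) (Q (x ^ α)) (x ^ α) :=
    integral_hasDerivAt_right
      ((hQ.mono (Icc_subset_Icc le_rfl hy.2.le)).intervalIntegrable_of_Icc hy.1.le)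
      (hQo.stronglyMeasurableAtFilter isOpen_Ioo _ hy)
      (hQo.continuousAt (isOpen_Ioo.mem_nhds hy))
  have hpow : HasDerivAt (fun x : ℝ => x ^ α) (α * x ^ (α - 1)) x :=
    Real.hasDerivAt_rpow_const (.inl hx0.ne')
  have hpow' : HasDerivAt (fun x : ℝ => x ^ (1 - α)) ((1 - α) * x ^ (1 - α - 1)) x :=
    Real.hasDerivAt_rpow_const (.inl hx0.ne')
  refine ((hS.comp x hpow).add (hpow'.mul (hSL.comp x hpow))).congr_deriv ?_
  have e1 : (x ^ α) ^ (1 / α - 1) = x ^ (1 - α) := by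
    rw [← Real.rpow_mul hx0.le]; congr 1; field_simp
  have e2 : x ^ (1 - α) * x ^ (α - 1) = 1 := by
    rw [← Real.rpow_add hx0]; norm_num
  have e3 : x ^ (1 - α - 1) = x ^ (-α) := by norm_num
  simp only [hg_def, Function.comp_def, e1, e3]
  field_simp
  linear_combination (α - 1) * Q (x ^ α) * e2

theorem antitoneOn_frThroughput (hQc : ContinuousOn Q (Icc 0 1)) (hQm : MonotoneOn Q (Icc 0 1))
    (hα0 : 0 < α) (hα1 : α ≤ 1) : AntitoneOn (frThroughput Q α) (Icc 0 1) := by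
  refine antitoneOn_of_deriv_nonpos (convex_Icc 0 1) (continuousOn_frThroughput hQc hα0 hα1)
    ?_ ?_ <;> rw [interior_Icc]
  · exact fun x hx => (hasDerivAt_frThroughput hQc hα0 hx).differentiableAt.differentiableWithinAt
  intro x hx
  rw [(hasDerivAt_frThroughput hQc hα0 hx).deriv]
  refine mul_nonpos_of_nonneg_of_nonpos (sub_nonneg.2 hα1) (sub_nonpos.2 ?_)
  have hy : x ^ α ∈ Icc 0 1 :=
    ⟨Real.rpow_nonneg hx.1.le α, Real.rpow_le_one hx.1.le hx.2.le hα0.le⟩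
  calc x ^ (-α) * ∫ u in 0..x ^ α, Q u
      ≤ x ^ (-α) * ((x ^ α - 0) * Q (x ^ α)) :=
        mul_le_mul_of_nonneg_left
          (intervalIntegral_le_mul_of_monotoneOn hy.1 (hQm.mono (Icc_subset_Icc le_rfl hy.2)))
          (Real.rpow_nonneg hx.1.le _)
    _ = Q (x ^ α) := by
        rw [sub_zero, ← mul_assoc, ← Real.rpow_add hx.1, neg_add_cancel, Real.rpow_zero, one_mul]

end frThroughput

theorem feedback_reduction_throughput_antitone_general (F R : ℝ → ℝ)
    (hFmono : StrictMono F) (hRmono : Monotone R)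
    (hQcont : ContinuousOn (fun u => R (Function.invFun F u)) (Set.Icc 0 1))
    (α : ℝ) (hα : α ∈ Set.Ioo (0 : ℝ) 1) :
    AntitoneOn (fun x => S F R (x ^ α) α + x ^ (1 - α) * SL F R (x ^ α))
        (Set.Icc (0 : ℝ) 1) ∧
    AntitoneOn (fun p => α * (S F R (p ^ α) α + p ^ (1 - α) * SL F R (p ^ α)))
        (Set.Icc (0 : ℝ) 1) ∧
    (∀ p ∈ Set.Ioo (0 : ℝ) 1,
      α * (S F R (p ^ α) α + p ^ (1 - α) * SL F R (p ^ α)) ≤ α * S F R 0 α) := by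
  have hanti : AntitoneOn (frThroughput (fun u => R (Function.invFun F u)) α) (Icc 0 1) :=
    antitoneOn_frThroughput hQcont (monotoneOn_comp_invFun hFmono hRmono hQcont) hα.1 hα.2.le
  have hzero : frThroughput (fun u => R (Function.invFun F u)) α 0 = S F R 0 α := by
    rw [frThroughput, Real.zero_rpow hα.1.ne', Real.zero_rpow (sub_pos.2 hα.2).ne', zero_mul,
      add_zero, S]
  refine ⟨hanti, fun p hp q hq hpq => mul_le_mul_of_nonneg_left (hanti hp hq hpq) hα.1.le,
    fun p hp => mul_le_mul_of_nonneg_left ?_ hα.1.le⟩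
  rw [← hzero]
  exact hanti (left_mem_Icc.2 zero_le_one) (Ioo_subset_Icc_self hp) hp.1.le

/-- `S(x^α, α) + x^{1-α} S_L(x^α, 1)` is nonincreasing in `x` on `[0,1]`; consequently
the feedback-reduced throughput `S_CS-FR(α, p) = α[S(p^α, α) + p^{1-α} S_L(p^α, 1)]`
is nonincreasing in the no-feedback probability `p` and is at most
`S_CS(α) = α S(0, α)`. -/
theorem feedback_reduction_throughput_antitone (F R : ℝ → ℝ)
    (hFmono : StrictMono F) (hFcont : Continuous F)
    (hR0 : ∀ y, 0 ≤ R y) (hRmono : Monotone R)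
    (hQcont : ContinuousOn (fun u => R (Function.invFun F u)) (Set.Icc 0 1))
    (α : ℝ) (hα : α ∈ Set.Ioo (0 : ℝ) 1)
    (hint : IntervalIntegrable
      (fun u => R (Function.invFun F u) * ((1 / α) * u ^ (1 / α - 1))) volume 0 1)
    (hint' : IntervalIntegrable (fun u => R (Function.invFun F u)) volume 0 1) :
    AntitoneOn (fun x => S F R (x ^ α) α + x ^ (1 - α) * SL F R (x ^ α))
        (Set.Icc (0 : ℝ) 1) ∧
    AntitoneOn (fun p => α * (S F R (p ^ α) α + p ^ (1 - α) * SL F R (p ^ α)))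
        (Set.Icc (0 : ℝ) 1) ∧
    (∀ p ∈ Set.Ioo (0 : ℝ) 1,
      α * (S F R (p ^ α) α + p ^ (1 - α) * SL F R (p ^ α)) ≤ α * S F R 0 α) :=
  feedback_reduction_throughput_antitone_general F R hFmono hRmono hQcont α hα
end

section
/- Under CDF-based scheduling, for a user with channel access ratio α ∈ (0,1], the average CDF value given selection is D(α) = ∫₀¹ u d(u^{1/α}) = 1/(1+α), the optimal average CDF value is D_UB(α) = (2-α)/2, and the qualitative fairness index I_D(α) = D(α)/D_UB(α) = 2/((1+α)(2-α)) satisfies 8/9 ≤ I_D(α) ≤ 1 for all α ∈ [0, 1]. -/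
open MeasureTheory intervalIntegral

/-!
With `p = 1/α`, the selected user's CDF value `F(γ)` has law `u^p` on `[0,1]`, whose mean is
`p/(p+1) = 1/(1+α)`; the upper bound `D_UB(α)` is the mean of `u` over `[1-α, 1]`.
The index `2/((1+α)(2-α))` lies in `[8/9, 1]` because `(1+α)(2-α) = 2 + α(1-α)` ranges over
`[2, 9/4]` on `[0,1]`.
-/

lemma mul_mul_rpow_sub_one {u : ℝ} (hu : 0 ≤ u) (p : ℝ) : u * (p * u ^ (p - 1)) = p * u ^ p := by
  rcases hu.eq_or_lt with rfl | hu
  · rcases eq_or_ne p 0 with rfl | hp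
    · simp
    · simp [Real.zero_rpow hp]
  · rw [Real.rpow_sub_one hu.ne']
    field_simp

lemma integral_id_mul_deriv_rpow {p : ℝ} (hp : -1 < p) :
    ∫ u in (0 : ℝ)..1, u * (p * u ^ (p - 1)) = p / (p + 1) := by
  have hp1 : p + 1 ≠ 0 := by linarith
  rw [integral_congr fun u hu => mul_mul_rpow_sub_one (by simpa using hu.1) p,
    intervalIntegral.integral_const_mul, integral_rpow (Or.inl hp), Real.one_rpow,
    Real.zero_rpow hp1]
  ring

lemma inv_sub_mul_integral_id {a b : ℝ} (hab : a ≠ b) :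
    (b - a)⁻¹ * ∫ x in a..b, x = (a + b) / 2 := by
  have hba : b - a ≠ 0 := sub_ne_zero.mpr hab.symm
  rw [integral_id]
  field_simp
  ring

lemma two_le_one_add_mul_two_sub {α : ℝ} (h0 : 0 ≤ α) (h1 : α ≤ 1) :
    2 ≤ (1 + α) * (2 - α) := by
  nlinarith

lemma one_add_mul_two_sub_le (α : ℝ) : (1 + α) * (2 - α) ≤ 9 / 4 := by
  nlinarith [sq_nonneg (α - 1 / 2)]

/-- Qualitative fairness of CDF-based scheduling: for a user with channel access ratio
`α ∈ (0,1]`, the average CDF value given selection is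
`D(α) = ∫₀¹ u d(u^{1/α}) = 1/(1+α)`, the optimal average CDF value is
`D_UB(α) = (1/α)∫_{1-α}^1 u du = (2-α)/2`, and the qualitative fairness index
`I_D(α) = D(α)/D_UB(α) = 2/((1+α)(2-α))` satisfies `8/9 ≤ I_D(α) ≤ 1` on `[0,1]`. -/
theorem qualitative_fairness_index_of_cdf_scheduling :
    (∀ α ∈ Set.Ioc (0 : ℝ) 1,
      (∫ u in (0 : ℝ)..1, u * ((1 / α) * u ^ (1 / α - 1))) = 1 / (1 + α) ∧
      (1 / α) * (∫ u in (1 - α)..(1 : ℝ), u) = (2 - α) / 2 ∧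
      (1 / (1 + α)) / ((2 - α) / 2) = 2 / ((1 + α) * (2 - α))) ∧
    (∀ α ∈ Set.Icc (0 : ℝ) 1,
      8 / 9 ≤ 2 / ((1 + α) * (2 - α)) ∧ 2 / ((1 + α) * (2 - α)) ≤ 1) := by
  refine ⟨fun α ⟨hα0, hα1⟩ => ⟨?_, ?_, ?_⟩, fun α ⟨hα0, hα1⟩ => ⟨?_, ?_⟩⟩
  · rw [integral_id_mul_deriv_rpow (by linarith [one_div_pos.mpr hα0])]
    field_simp
  · have h := inv_sub_mul_integral_id (a := 1 - α) (b := 1) (by linarith)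
    rw [sub_sub_cancel, ← one_div] at h
    rw [h]
    ring
  · have h2α : 2 - α ≠ 0 := by linarith
    field_simp
  · have hlo := two_le_one_add_mul_two_sub hα0 hα1
    calc (8 : ℝ) / 9 = 2 / (9 / 4) := by norm_num
      _ ≤ 2 / ((1 + α) * (2 - α)) := by gcongr; exact one_add_mul_two_sub_le α
  · have hlo := two_le_one_add_mul_two_sub hα0 hα1
    exact (div_le_one (by linarith)).mpr hlo
end
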